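/- arXiv:2502.11852 — 5 statements merged into one kernel-verified Lean document; each statement's English description precedes it below -/
import Mathlib

section
/- The Riccati equation w' + w² = z has no solution w in the field of rational functions ℂ(z). -/
open Polynomial

/-- The formal derivative of a rational function `w = num/denom`, defined as
`(num' * denom - num * denom') / denom ^ 2`. -/
noncomputable def ratDeriv (w : RatFunc ℂ) : RatFunc ℂ :=
  RatFunc.mk (derivative w.num * w.denom - w.num * derivative w.denom) (w.denom ^ 2)

theorem riccati_no_rational_solution :
    ¬ ∃ w : RatFunc ℂ, ratDeriv w + w ^ 2 = RatFunc.X := by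
  rintro ⟨w, hw⟩
  set p := w.num with hp
  set q := w.denom with hqdef
  have hq : q ≠ 0 := w.denom_ne_zero
  have hq' : (algebraMap ℂ[X] (RatFunc ℂ)) q ≠ 0 := by
    simpa using RatFunc.algebraMap_ne_zero hq
  have hwpq : (algebraMap ℂ[X] (RatFunc ℂ)) p / (algebraMap ℂ[X] (RatFunc ℂ)) q = w :=
    RatFunc.num_div_denom w
  have hw2 : w ^ 2 = (algebraMap ℂ[X] (RatFunc ℂ)) p ^ 2 / (algebraMap ℂ[X] (RatFunc ℂ)) q ^ 2 := by
    rw [← hwpq, div_pow]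
  rw [ratDeriv, RatFunc.mk_eq_div, hw2, ← RatFunc.algebraMap_X] at hw
  rw [map_pow, ← add_div, div_eq_iff (pow_ne_zero 2 hq')] at hw
  have hE : derivative p * q - p * derivative q + p ^ 2 = X * q ^ 2 := by
    apply IsFractionRing.injective ℂ[X] (RatFunc ℂ)
    simpa only [map_add, map_sub, map_mul, map_pow] using hw
  -- degree argument
  by_cases hp0 : p = 0
  · rw [hp0] at hE
    simp only [derivative_zero, zero_mul, mul_zero, sub_zero, zero_pow, add_zero,
      mul_comm, ne_eq, OfNat.ofNat_ne_zero, not_false_eq_true, zero_sub, neg_zero] at hE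
    exact (mul_ne_zero X_ne_zero (pow_ne_zero 2 hq)) hE.symm
  · set m := p.natDegree with hm
    set n := q.natDegree with hn
    have hRHS : (X * q ^ 2).natDegree = 1 + 2 * n := by
      rw [natDegree_mul X_ne_zero (pow_ne_zero 2 hq), natDegree_X, natDegree_pow]
    have hb1 : (derivative p * q).natDegree ≤ m - 1 + n :=
      (natDegree_mul_le).trans (by gcongr; exact natDegree_derivative_le p)
    have hb2 : (p * derivative q).natDegree ≤ m + (n - 1) :=
      (natDegree_mul_le).trans (by gcongr; exact natDegree_derivative_le q)
    have hb3 : (derivative p * q - p * derivative q).natDegree ≤ max (m - 1 + n) (m + (n - 1)) :=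
      (natDegree_sub_le _ _).trans (by gcongr)
    have hp2 : (p ^ 2).natDegree = 2 * m := by rw [natDegree_pow]
    rcases le_or_gt m n with hmn | hmn
    · have hL : (derivative p * q - p * derivative q + p ^ 2).natDegree ≤ 2 * n := by
        refine (natDegree_add_le _ _).trans (max_le (hb3.trans ?_) (by omega))
        omega
      rw [hE, hRHS] at hL
      omega
    · have hm1 : 1 ≤ m := by
        rcases Nat.eq_zero_or_pos m with h | h
        · omega
        · exact h
      have hlt : (derivative p * q - p * derivative q).natDegree < (p ^ 2).natDegree := by
        rw [hp2]; exact lt_of_le_of_lt hb3 (by omega)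
      have hL : (derivative p * q - p * derivative q + p ^ 2).natDegree = 2 * m := by
        rw [natDegree_add_eq_right_of_natDegree_lt hlt, hp2]
      rw [hE, hRHS] at hL
      omega
end

section
/- Any nonzero entire solution u of the Airy equation u'' = z·u is transcendental over the field of rational functions ℂ(z); i.e., there is no nonzero polynomial p(z,y) with p(z, u(z)) = 0 identically. -/
open Polynomial Metric Set Finset in
/-- An entire function with polynomial growth is a polynomial. -/
private lemma entire_poly_growth : ∀ (k : ℕ) (f : ℂ → ℂ), Differentiable ℂ f →
    ∀ C : ℝ, (∀ z, ‖f z‖ ≤ C * (1 + ‖z‖) ^ k) →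
    ∃ q : Polynomial ℂ, ∀ z, f z = q.eval z := by
  intro k
  induction k with
  | zero =>
    intro f hf C hC
    obtain ⟨c, hc⟩ := hf.exists_const_forall_eq_of_bounded (by
      rw [isBounded_iff_forall_norm_le]
      exact ⟨C, by rintro x ⟨z, rfl⟩; simpa using hC z⟩)
    exact ⟨Polynomial.C c, fun z => by simp [hc z]⟩
  | succ k ih =>
    intro f hf C hC
    set g := dslope f 0 with hg
    have hgd : Differentiable ℂ g := by
      rw [← differentiableOn_univ]
      exact (Complex.differentiableOn_dslope (by simp)).2 hf.differentiableOn
    obtain ⟨M, hM⟩ := (isCompact_closedBall (0:ℂ) 1).exists_bound_of_continuousOn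
      hgd.continuous.continuousOn
    have hC0 : 0 ≤ C := le_trans (norm_nonneg (f 0)) (by simpa using hC 0)
    have hM0 : 0 ≤ M := le_trans (norm_nonneg _) (hM 0 (by simp))
    set C' := M + 2 * C + ‖f 0‖ with hC'
    have hgb : ∀ z, ‖g z‖ ≤ C' * (1 + ‖z‖) ^ k := by
      intro z
      have h1 : (1:ℝ) ≤ (1 + ‖z‖) ^ k := one_le_pow₀ (by nlinarith [norm_nonneg z])
      rcases le_or_gt ‖z‖ 1 with hz | hz
      · have := hM z (by simpa using hz)
        nlinarith [norm_nonneg (f 0), norm_nonneg z]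
      · have hz0 : z ≠ 0 := by intro h; rw [h] at hz; simp at hz; linarith
        have : g z = (f z - f 0) / z := by
          rw [hg, dslope_of_ne _ hz0, slope_def_field]
          rw [sub_zero]
        rw [this]
        rw [norm_div]
        have h2 : ‖f z - f 0‖ ≤ C * (1 + ‖z‖) ^ (k+1) + ‖f 0‖ :=
          le_trans (norm_sub_le _ _) (by gcongr; exact hC z)
        have h3 : (0:ℝ) < ‖z‖ := by linarith
        rw [div_le_iff₀ h3]
        have h4 : (1 + ‖z‖) ^ (k+1) ≤ (1 + ‖z‖)^k * (2 * ‖z‖) := by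
          rw [pow_succ]
          gcongr <;> nlinarith
        have h5 : C * (1 + ‖z‖) ^ (k+1) ≤ 2 * C * (1 + ‖z‖)^k * ‖z‖ := by nlinarith
        have e1 := mul_le_mul_of_nonneg_left h1 (norm_nonneg (f 0))
        have e2 := mul_le_mul_of_nonneg_left hz.le
          (mul_nonneg (norm_nonneg (f 0)) (by positivity : (0:ℝ) ≤ (1 + ‖z‖)^k))
        have e3 : (0:ℝ) ≤ M * ((1 + ‖z‖)^k * ‖z‖) := by positivity
        rw [hC']
        nlinarith [e1, e2, e3, h2, h5]
    obtain ⟨q, hq⟩ := ih g hgd C' hgb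
    refine ⟨Polynomial.C (f 0) + Polynomial.X * q, fun z => ?_⟩
    rcases eq_or_ne z 0 with rfl | hz0
    · simp
    · have : g z = (f z - f 0) / z := by
        rw [hg, dslope_of_ne _ hz0, slope_def_field]; rw [sub_zero]
      have := (hq z) ▸ this
      simp only [Polynomial.eval_add, Polynomial.eval_C, Polynomial.eval_mul, Polynomial.eval_X]
      have h7 : eval z q * z = f z - f 0 := by
        field_simp at this; linear_combination this
      linear_combination -h7

open Polynomial Finset in
/-- Polynomial evaluations have polynomial growth. -/
private lemma poly_eval_growth (r : Polynomial ℂ) :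
    ∀ z : ℂ, ‖r.eval z‖ ≤ (∑ i ∈ range (r.natDegree + 1), ‖r.coeff i‖) * (1 + ‖z‖) ^ r.natDegree := by
  intro z
  rw [Polynomial.eval_eq_sum_range]
  refine le_trans (norm_sum_le _ _) ?_
  rw [Finset.sum_mul]
  refine Finset.sum_le_sum fun i hi => ?_
  rw [norm_mul, norm_pow]
  have h1 : (1:ℝ) ≤ 1 + ‖z‖ := by nlinarith [norm_nonneg z]
  have ha : ‖z‖ ^ i ≤ (1 + ‖z‖) ^ i := pow_le_pow_left₀ (norm_nonneg z) (by linarith) i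
  have hb : (1 + ‖z‖) ^ i ≤ (1 + ‖z‖) ^ r.natDegree :=
    pow_le_pow_right₀ h1 (by simpa [Nat.lt_succ_iff] using hi)
  have : ‖z‖ ^ i ≤ (1 + ‖z‖) ^ r.natDegree := le_trans ha hb
  exact mul_le_mul_of_nonneg_left this (norm_nonneg _)

open Finset in
/-- Root bound for "monic-type" relations. -/
private lemma root_bound (n : ℕ) (c : ℕ → ℂ) (x : ℂ)
    (h : x ^ n = -(∑ i ∈ range n, c i * x ^ i)) :
    ‖x‖ ≤ 1 + ∑ i ∈ range n, ‖c i‖ := by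
  have hs : (0:ℝ) ≤ ∑ i ∈ range n, ‖c i‖ := Finset.sum_nonneg fun i _ => norm_nonneg _
  rcases le_or_gt ‖x‖ 1 with hx | hx
  · linarith
  · have hn : n ≠ 0 := by rintro rfl; simp at h
    have h1 : ‖x‖ ^ n ≤ (∑ i ∈ range n, ‖c i‖) * ‖x‖ ^ (n - 1) := by
      calc ‖x‖ ^ n = ‖x ^ n‖ := (norm_pow x n).symm
        _ = ‖∑ i ∈ range n, c i * x ^ i‖ := by rw [h, norm_neg]
        _ ≤ ∑ i ∈ range n, ‖c i * x ^ i‖ := norm_sum_le _ _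
        _ ≤ ∑ i ∈ range n, ‖c i‖ * ‖x‖ ^ (n - 1) := by
            refine Finset.sum_le_sum fun i hi => ?_
            rw [norm_mul, norm_pow]
            exact mul_le_mul_of_nonneg_left
              (pow_le_pow_right₀ hx.le (by have := Finset.mem_range.mp hi; omega)) (norm_nonneg _)
        _ = (∑ i ∈ range n, ‖c i‖) * ‖x‖ ^ (n - 1) := (Finset.sum_mul _ _ _).symm
    have hxp : (0:ℝ) < ‖x‖ ^ (n - 1) := pow_pos (by linarith) _
    have h2 : ‖x‖ ^ n = ‖x‖ * ‖x‖ ^ (n - 1) := by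
      rw [← pow_succ']; congr 1; omega
    rw [h2] at h1
    have h3 : ‖x‖ ≤ ∑ i ∈ range n, ‖c i‖ := le_of_mul_le_mul_right (by linarith) hxp
    linarith

private noncomputable def Phi : MvPolynomial (Fin 2) ℂ →+* Polynomial (Polynomial ℂ) :=
  MvPolynomial.eval₂Hom ((Polynomial.C).comp (Polynomial.C))
    ![Polynomial.C Polynomial.X, Polynomial.X]

private noncomputable def Psi : Polynomial (Polynomial ℂ) →+* MvPolynomial (Fin 2) ℂ :=
  Polynomial.eval₂RingHom
    (Polynomial.eval₂RingHom (MvPolynomial.C) (MvPolynomial.X 0)) (MvPolynomial.X 1)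

private lemma psi_phi (p : MvPolynomial (Fin 2) ℂ) : Psi (Phi p) = p := by
  have : Psi.comp Phi = RingHom.id _ := by
    apply MvPolynomial.ringHom_ext
    · intro a; simp [Phi, Psi]
    · intro i
      fin_cases i <;> simp [Phi, Psi]
  calc Psi (Phi p) = (Psi.comp Phi) p := rfl
    _ = p := by rw [this]; rfl

private lemma phi_eval (p : MvPolynomial (Fin 2) ℂ) (z w : ℂ) :
    Polynomial.eval₂ (Polynomial.evalRingHom z) w (Phi p) = MvPolynomial.eval ![z, w] p := by
  have : (Polynomial.eval₂RingHom (Polynomial.evalRingHom z) w).comp Phi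
      = (MvPolynomial.eval ![z, w] : MvPolynomial (Fin 2) ℂ →+* ℂ) := by
    apply MvPolynomial.ringHom_ext
    · intro a; simp [Phi]
    · intro i; fin_cases i <;> simp [Phi]
  calc Polynomial.eval₂ (Polynomial.evalRingHom z) w (Phi p)
      = ((Polynomial.eval₂RingHom (Polynomial.evalRingHom z) w).comp Phi) p := rfl
    _ = MvPolynomial.eval ![z, w] p := by rw [this]

open MvPolynomial

theorem airy_solution_transcendental (u : ℂ → ℂ) (hu : Differentiable ℂ u)
    (hu0 : u ≠ 0) (hairy : ∀ z : ℂ, deriv (deriv u) z = z * u z) :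
    ¬ ∃ p : MvPolynomial (Fin 2) ℂ, p ≠ 0 ∧ ∀ z : ℂ, eval ![z, u z] p = 0 := by
  rintro ⟨p, hp0, hpe⟩
  classical
  set P : Polynomial (Polynomial ℂ) := Phi p with hP
  have hP0 : P ≠ 0 := by
    intro h
    apply hp0
    have := psi_phi p
    rw [← hP] at this  -- no-op
    rw [h, map_zero] at this
    exact this.symm
  set n := P.natDegree with hn
  set a : Polynomial ℂ := P.coeff n with ha_def
  have ha : a ≠ 0 := by
    have : P.leadingCoeff ≠ 0 := Polynomial.leadingCoeff_ne_zero.mpr hP0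
    exact this
  -- scalar relation
  have hrel : ∀ z : ℂ, ∑ i ∈ Finset.range (n + 1), (P.coeff i).eval z * (u z) ^ i = 0 := by
    intro z
    have h1 : Polynomial.eval₂ (Polynomial.evalRingHom z) (u z) P = 0 := by
      rw [phi_eval]; exact hpe z
    rw [Polynomial.eval₂_eq_sum_range] at h1
    simpa using h1
  -- n = 0 case
  rcases Nat.eq_zero_or_pos n with hn0 | hnpos
  · have h0 : ∀ z : ℂ, (P.coeff 0).eval z = 0 := by
      intro z
      have := hrel z
      rw [hn0] at this
      simpa using this
    have hz : P.coeff 0 = 0 := Polynomial.zero_of_eval_zero _ h0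
    exact ha (by rw [ha_def, hn0]; exact hz)
  -- main case
  set b : ℕ → Polynomial ℂ := fun i => P.coeff i * a ^ (n - 1 - i) with hb
  obtain ⟨m, hm⟩ : ∃ m, n = m + 1 := ⟨n - 1, by omega⟩
  -- the identity for v = a * u
  have hvid : ∀ z : ℂ, (a.eval z * u z) ^ n
      = -(∑ i ∈ Finset.range n, (b i).eval z * (a.eval z * u z) ^ i) := by
    intro z
    set c : ℕ → ℂ := fun i => (P.coeff i).eval z with hc
    set w := u z with hw
    have h5 : ∑ i ∈ Finset.range n, c i * w ^ i = -(c n * w ^ n) := by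
      have := hrel z
      rw [Finset.sum_range_succ] at this
      linear_combination this
    have hsum : ∑ i ∈ Finset.range n, (b i).eval z * (a.eval z * w) ^ i
        = (∑ i ∈ Finset.range n, c i * w ^ i) * (c n) ^ (n - 1) := by
      rw [Finset.sum_mul]
      refine Finset.sum_congr rfl fun i hi => ?_
      have hi' := Finset.mem_range.mp hi
      have : a.eval z = c n := rfl
      rw [hb]
      simp only [Polynomial.eval_mul, Polynomial.eval_pow]
      rw [this, mul_pow]
      calc c i * c n ^ (n - 1 - i) * (c n ^ i * w ^ i)
          = c i * w ^ i * (c n ^ (n - 1 - i) * c n ^ i) := by ring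
        _ = c i * w ^ i * c n ^ (n - 1) := by rw [← pow_add]; congr 2; omega
    rw [hsum, h5]
    have hcn : a.eval z = c n := rfl
    rw [hcn, hm]
    simp only [show m + 1 - 1 = m from by omega, show 1 + m - 1 = m from by omega]
    ring
  -- growth bound for v
  set S : ℕ → ℝ := fun i => ∑ j ∈ Finset.range ((b i).natDegree + 1), ‖(b i).coeff j‖ with hS
  set K : ℕ := (Finset.range n).sup fun i => (b i).natDegree with hK
  have hS0 : ∀ i, 0 ≤ S i := fun i => Finset.sum_nonneg fun j _ => norm_nonneg _
  have hbound : ∀ z : ℂ, ‖a.eval z * u z‖ ≤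
      (1 + ∑ i ∈ Finset.range n, S i) * (1 + ‖z‖) ^ K := by
    intro z
    have h1 : (1:ℝ) ≤ 1 + ‖z‖ := by nlinarith [norm_nonneg z]
    have hone : (1:ℝ) ≤ (1 + ‖z‖) ^ K := one_le_pow₀ h1
    have h2 := root_bound n (fun i => (b i).eval z) (a.eval z * u z) (hvid z)
    have h3 : ∑ i ∈ Finset.range n, ‖(b i).eval z‖
        ≤ ∑ i ∈ Finset.range n, S i * (1 + ‖z‖) ^ K := by
      refine Finset.sum_le_sum fun i hi => ?_
      refine le_trans (poly_eval_growth (b i) z) ?_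
      exact mul_le_mul_of_nonneg_left
        (pow_le_pow_right₀ h1 (Finset.le_sup (f := fun i => (b i).natDegree) hi)) (hS0 i)
    rw [← Finset.sum_mul] at h3
    have hSsum : (0:ℝ) ≤ ∑ i ∈ Finset.range n, S i := Finset.sum_nonneg fun i _ => hS0 i
    nlinarith [h2, h3, hone, hSsum]
  -- v is a polynomial
  have hvdiff : Differentiable ℂ fun z => a.eval z * u z :=
    (a.differentiable).mul hu
  obtain ⟨q, hq⟩ := entire_poly_growth K _ hvdiff _ hbound
  -- u is not identically zero: get a point
  obtain ⟨z0, hz0⟩ : ∃ z0, u z0 ≠ 0 := by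
    by_contra h; push_neg at h; exact hu0 (funext h)
  have hsopen : IsOpen {z : ℂ | u z ≠ 0} :=
    isOpen_compl_singleton.preimage hu.continuous
  have hsinf : Set.Infinite {z : ℂ | u z ≠ 0} :=
    infinite_of_mem_nhds z0 (hsopen.mem_nhds hz0)
  have haroots : Set.Finite {z : ℂ | a.eval z = 0} := by
    have := Polynomial.finite_setOf_isRoot ha
    simpa [Polynomial.IsRoot] using this
  have hq0 : q ≠ 0 := by
    intro h
    rw [h] at hq
    obtain ⟨z1, hz1, hz1'⟩ := (hsinf.diff haroots).nonempty
    have := hq z1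
    simp at this
    rcases this with h' | h'
    · exact hz1' h'
    · exact hz1 h'
  -- the set where a ≠ 0
  set s' : Set ℂ := {z : ℂ | a.eval z ≠ 0} with hs'
  have hs'open : IsOpen s' := isOpen_compl_singleton.preimage (a.continuous)
  have hs'inf : s'.Infinite := by
    have : s' = {z : ℂ | a.eval z = 0}ᶜ := by ext z; simp [hs']
    rw [this]
    exact haroots.infinite_compl
  set N : Polynomial ℂ := Polynomial.derivative q * a - q * Polynomial.derivative a with hN
  set D : Polynomial ℂ := a * a with hD
  have hDne : ∀ z ∈ s', D.eval z ≠ 0 := by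
    intro z hz
    simp only [hD, Polynomial.eval_mul]
    exact mul_ne_zero hz hz
  -- first derivative
  have hud : ∀ z ∈ s', deriv u z = N.eval z / D.eval z := by
    intro z hz
    have hev : u =ᶠ[nhds z] fun w => q.eval w / a.eval w := by
      filter_upwards [hs'open.mem_nhds hz] with w hw
      have hw' : Polynomial.eval w a ≠ 0 := hw
      rw [eq_div_iff hw']
      linear_combination hq w
    rw [hev.deriv_eq]
    rw [deriv_fun_div (q.differentiable.differentiableAt) (a.differentiable.differentiableAt) hz]
    simp only [Polynomial.deriv, hN, hD, Polynomial.eval_mul, Polynomial.eval_sub]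
    congr 1
    ring
  -- second derivative and the key polynomial identity
  set L : Polynomial ℂ := (Polynomial.derivative N * D - N * Polynomial.derivative D) * a with hL
  set R : Polynomial ℂ := Polynomial.X * q * D ^ 2 with hR
  have hkey : ∀ z ∈ s', L.eval z = R.eval z := by
    intro z hz
    have hev2 : deriv u =ᶠ[nhds z] fun w => N.eval w / D.eval w := by
      filter_upwards [hs'open.mem_nhds hz] with w hw
      exact hud w hw
    have h1 : deriv (deriv u) z
        = ((Polynomial.derivative N).eval z * D.eval z
            - N.eval z * (Polynomial.derivative D).eval z) / (D.eval z) ^ 2 := by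
      rw [hev2.deriv_eq]
      rw [deriv_fun_div (N.differentiable.differentiableAt) (D.differentiable.differentiableAt)
        (hDne z hz)]
      simp only [Polynomial.deriv]
    rw [hairy z] at h1
    have haz : a.eval z ≠ 0 := hz
    have hDz : D.eval z ≠ 0 := hDne z hz
    have h2 : u z = q.eval z / a.eval z := by
      rw [eq_div_iff haz]
      linear_combination hq z
    rw [h2] at h1
    field_simp at h1
    simp only [hL, hR, Polynomial.eval_mul, Polynomial.eval_sub, Polynomial.eval_pow,
      Polynomial.eval_X]
    have hDa : D.eval z = a.eval z * a.eval z := by simp [hD]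
    linear_combination -h1
  have hLR : L = R := by
    apply Polynomial.eq_of_infinite_eval_eq
    exact hs'inf.mono fun z hz => hkey z hz
  -- degree contradiction
  set dq := q.natDegree with hdq
  set da := a.natDegree with hda
  have hNdeg : N.natDegree ≤ dq + da := by
    refine le_trans (Polynomial.natDegree_sub_le _ _) (max_le ?_ ?_)
    · exact le_trans Polynomial.natDegree_mul_le
        (by have := Polynomial.natDegree_derivative_le q; omega)
    · exact le_trans Polynomial.natDegree_mul_le
        (by have := Polynomial.natDegree_derivative_le a; omega)
  have hDdeg : D.natDegree = 2 * da := by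
    rw [hD, Polynomial.natDegree_mul ha ha]; omega
  have hLdeg : L.natDegree ≤ dq + 4 * da := by
    refine le_trans Polynomial.natDegree_mul_le ?_
    have h1 : (Polynomial.derivative N * D - N * Polynomial.derivative D).natDegree
        ≤ dq + 3 * da := by
      refine le_trans (Polynomial.natDegree_sub_le _ _) (max_le ?_ ?_)
      · refine le_trans Polynomial.natDegree_mul_le ?_
        have := Polynomial.natDegree_derivative_le N
        omega
      · refine le_trans Polynomial.natDegree_mul_le ?_
        have := Polynomial.natDegree_derivative_le D
        omega
    omega
  have hRdeg : R.natDegree = 1 + dq + 4 * da := by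
    rw [hR, Polynomial.natDegree_mul (mul_ne_zero Polynomial.X_ne_zero hq0)
      (pow_ne_zero 2 (mul_ne_zero ha ha)),
      Polynomial.natDegree_mul Polynomial.X_ne_zero hq0,
      Polynomial.natDegree_pow, Polynomial.natDegree_X, hDdeg]
    omega
  rw [hLR] at hLdeg
  omega
end

section
/- Any nonzero entire solution u of the Airy equation u'' = z·u is an entire function of order exactly 3/2. -/
open Filter

/-- The order of an entire function `f`, i.e.
`limsup_{r → ∞} (log log max_{|z| = r} |f z|) / log r`. -/
noncomputable def entireOrder (f : ℂ → ℂ) : ℝ :=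
  limsup (fun r : ℝ =>
    Real.log (Real.log (sSup ((fun z => ‖f z‖) '' Metric.sphere (0 : ℂ) r))) /
      Real.log r) atTop


section AiryAux

open Complex Metric

variable {u : ℂ → ℂ}

lemma diffDeriv (hf : Differentiable ℂ u) : Differentiable ℂ (deriv u) :=
  (Complex.analyticOnNhd_univ_iff_differentiable.mp
    ((Complex.analyticOnNhd_univ_iff_differentiable.mpr hf).deriv))

lemma diffIter (hu : Differentiable ℂ u) (n : ℕ) : Differentiable ℂ (iteratedDeriv n u) := by
  induction n with
  | zero => simpa using hu
  | succ n ih => rw [iteratedDeriv_succ]; exact diffDeriv ih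

lemma iter_mul (hu : Differentiable ℂ u) (n : ℕ) (z : ℂ) :
    iteratedDeriv n (fun w => w * u w) z
      = z * iteratedDeriv n u z + n * iteratedDeriv (n-1) u z := by
  induction n generalizing z with
  | zero => simp
  | succ n ih =>
    rw [iteratedDeriv_succ]
    have : deriv (iteratedDeriv n fun w => w * u w) z =
        deriv (fun w => w * iteratedDeriv n u w + n * iteratedDeriv (n-1) u w) z := by
      congr 1; funext w; exact ih w
    rw [this]
    have h1 : HasDerivAt (iteratedDeriv n u) (iteratedDeriv (n+1) u z) z := by
      rw [iteratedDeriv_succ]; exact ((diffIter hu n) z).hasDerivAt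
    have h2 : HasDerivAt (iteratedDeriv (n-1) u) (deriv (iteratedDeriv (n-1) u) z) z :=
      ((diffIter hu (n-1)) z).hasDerivAt
    have H : HasDerivAt (fun w => w * iteratedDeriv n u w + n * iteratedDeriv (n-1) u w)
        (1 * iteratedDeriv n u z + z * iteratedDeriv (n+1) u z
          + n * deriv (iteratedDeriv (n-1) u) z) z :=
      ((hasDerivAt_id z).mul h1).add (h2.const_mul _)
    rw [H.deriv, Nat.add_sub_cancel]
    have hd : (n : ℂ) * deriv (iteratedDeriv (n-1) u) z = n * iteratedDeriv n u z := by
      cases n with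
      | zero => simp
      | succ m =>
        have : m + 1 - 1 = m := rfl
        rw [this, ← iteratedDeriv_succ]
    rw [hd]
    push_cast
    ring

lemma c_rec (hu : Differentiable ℂ u) (hairy : ∀ z : ℂ, deriv (deriv u) z = z * u z) (n : ℕ) :
    iteratedDeriv (n+3) u 0 = (n+1) * iteratedDeriv n u 0 := by
  have h : iteratedDeriv (n+3) u = iteratedDeriv (n+1) (fun w => w * u w) := by
    rw [show n + 3 = (n+2) + 1 from rfl, iteratedDeriv_succ', show n + 2 = (n+1)+1 from rfl,
      iteratedDeriv_succ']
    exact congrArg (iteratedDeriv (n+1)) (funext hairy)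
  rw [h, iter_mul hu (n+1) 0, Nat.add_sub_cancel]
  push_cast
  ring

lemma c_two (hairy : ∀ z : ℂ, deriv (deriv u) z = z * u z) :
    iteratedDeriv 2 u 0 = 0 := by
  rw [show (2:ℕ) = 1 + 1 from rfl, iteratedDeriv_succ', iteratedDeriv_one]
  simpa using hairy 0

lemma c_upper (hu : Differentiable ℂ u) (hairy : ∀ z : ℂ, deriv (deriv u) z = z * u z) :
    ∀ n : ℕ, ‖iteratedDeriv n u 0‖ ≤
      (‖u 0‖ + ‖iteratedDeriv 1 u 0‖) * 3^(n/3) * Nat.factorial (n/3) := by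
  intro n
  induction n using Nat.strong_induction_on with
  | _ n ih =>
    have hA0 : (0:ℝ) ≤ ‖u 0‖ + ‖iteratedDeriv 1 u 0‖ :=
      add_nonneg (norm_nonneg _) (norm_nonneg _)
    match n with
    | 0 => simpa using le_add_of_nonneg_right (norm_nonneg _)
    | 1 => simpa using le_add_of_nonneg_left (norm_nonneg _)
    | 2 => simpa [c_two hairy] using hA0
    | (m+3) =>
      have key := c_rec hu hairy m
      have habs : ‖iteratedDeriv (m+3) u 0‖
          = (m+1) * ‖iteratedDeriv m u 0‖ := by
        rw [key, norm_mul]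
        congr 1
        rw [show ((m:ℂ)+1) = ((m+1 : ℕ) : ℂ) by push_cast; ring, Complex.norm_natCast]
        push_cast; ring
      have hdiv : (m+3)/3 = m/3 + 1 := by omega
      rw [habs, hdiv]
      have h1 : (m:ℝ) + 1 ≤ 3 * (m/3 + 1 : ℕ) := by
        have : m + 1 ≤ 3 * (m/3 + 1) := by omega
        exact_mod_cast this
      calc ((m:ℝ)+1) * ‖iteratedDeriv m u 0‖
          ≤ (3 * (m/3 + 1 : ℕ)) * ((‖u 0‖ + ‖iteratedDeriv 1 u 0‖)
              * 3^(m/3) * Nat.factorial (m/3)) := by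
            apply mul_le_mul h1 (ih m (by omega)) (norm_nonneg _)
            positivity
        _ = (‖u 0‖ + ‖iteratedDeriv 1 u 0‖) * 3^(m/3+1) * Nat.factorial (m/3+1) := by
            rw [Nat.factorial_succ]
            push_cast
            ring

lemma c_lower (hu : Differentiable ℂ u) (hairy : ∀ z : ℂ, deriv (deriv u) z = z * u z)
    (i : ℕ) (hi : i < 3) : ∀ k : ℕ,
    ‖iteratedDeriv i u 0‖ * Nat.factorial k ≤ ‖iteratedDeriv (3*k+i) u 0‖ := by
  intro k
  induction k with
  | zero => simp
  | succ k ih =>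
    have key := c_rec hu hairy (3*k+i)
    have heq : 3*(k+1)+i = (3*k+i)+3 := by omega
    rw [heq, key, norm_mul]
    have habs : ‖((3*k+i : ℕ)+1 : ℂ)‖ = ((3*k+i+1 : ℕ) : ℝ) := by
      rw [show ((3*k+i : ℕ):ℂ)+1 = ((3*k+i+1 : ℕ) : ℂ) by push_cast; ring, Complex.norm_natCast]
    rw [habs]
    calc ‖iteratedDeriv i u 0‖ * Nat.factorial (k+1)
        = (k+1 : ℕ) * (‖iteratedDeriv i u 0‖ * Nat.factorial k) := by
          rw [Nat.factorial_succ]; push_cast; ring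
      _ ≤ (3*k+i+1 : ℕ) * ‖iteratedDeriv (3*k+i) u 0‖ := by
          apply mul_le_mul _ ih (by positivity) (by positivity)
          exact_mod_cast by omega

lemma cauchy_est (hu : Differentiable ℂ u) {r : ℝ} (hr : 0 < r) {M : ℝ}
    (hM : ∀ z ∈ sphere (0:ℂ) r, ‖u z‖ ≤ M) (n : ℕ) :
    ‖iteratedDeriv n u 0‖ * r ^ n ≤ Nat.factorial n * M := by
  lift r to NNReal using hr.le with R hR
  have hR0 : (0:NNReal) < R := by exact_mod_cast hr
  have h : HasFPowerSeriesOnBall u (cauchyPowerSeries u 0 R) 0 R :=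
    (hu.differentiableOn).hasFPowerSeriesOnBall hR0
  have key := h.factorial_smul (1:ℂ) n
  have hid : iteratedDeriv n u 0 = iteratedFDeriv ℂ n u 0 (fun _ => 1) :=
    iteratedDeriv_eq_iteratedFDeriv ..
  have hnorm : ‖iteratedDeriv n u 0‖
      = Nat.factorial n * ‖cauchyPowerSeries u 0 R n (fun _ => 1)‖ := by
    rw [hid, ← key, ← Nat.cast_smul_eq_nsmul ℂ, norm_smul]
    simp
  have hop : ‖cauchyPowerSeries u 0 R n (fun _ => (1:ℂ))‖ ≤ ‖cauchyPowerSeries u 0 R n‖ := by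
    have := (cauchyPowerSeries u 0 R n).le_opNorm (fun _ => (1:ℂ))
    simpa using this
  have hint : (∫ θ : ℝ in (0)..2 * Real.pi, ‖u (circleMap 0 R θ)‖) ≤ 2 * Real.pi * M := by
    have hcont : Continuous fun θ : ℝ => ‖u (circleMap 0 R θ)‖ :=
      (hu.continuous.comp (continuous_circleMap 0 R)).norm
    calc (∫ θ : ℝ in (0)..2 * Real.pi, ‖u (circleMap 0 R θ)‖)
        ≤ ∫ _ : ℝ in (0)..2 * Real.pi, M := by
          apply intervalIntegral.integral_mono_on Real.two_pi_pos.le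
            (hcont.intervalIntegrable _ _) (intervalIntegrable_const)
          intro x _
          exact hM _ (circleMap_mem_sphere 0 R.coe_nonneg x)
      _ = 2 * Real.pi * M := by simp [mul_comm]
  have hM0 : 0 ≤ M := by
    obtain ⟨z, hz⟩ : (sphere (0:ℂ) (R:ℝ)).Nonempty := NormedSpace.sphere_nonempty.mpr hr.le
    exact le_trans (norm_nonneg _) (hM z hz)
  have hser := norm_cauchyPowerSeries_le u 0 (R:ℝ) n
  have habsR : |(R:ℝ)| = (R:ℝ) := abs_of_nonneg R.coe_nonneg
  rw [hnorm]
  calc Nat.factorial n * ‖cauchyPowerSeries u 0 (R:ℝ) n (fun _ => (1:ℂ))‖ * (R:ℝ)^n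
      ≤ Nat.factorial n * (((2 * Real.pi)⁻¹ * (2 * Real.pi * M)) * ((R:ℝ)⁻¹)^n) * (R:ℝ)^n := by
        apply mul_le_mul_of_nonneg_right _ (pow_nonneg R.coe_nonneg n)
        apply mul_le_mul_of_nonneg_left _ (by positivity)
        refine le_trans hop (le_trans hser ?_)
        rw [habsR, inv_pow]
        apply mul_le_mul_of_nonneg_right _ (by positivity)
        apply mul_le_mul_of_nonneg_left hint (by positivity)
    _ = Nat.factorial n * M := by
        have h2π : (2*Real.pi) ≠ 0 := by positivity
        have hRn : ((R:ℝ))^n ≠ 0 := by positivity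
        field_simp
        rw [one_div, inv_pow, mul_assoc, inv_mul_cancel₀ hRn, mul_one]

lemma pow_div_fact_le_exp {y : ℝ} (hy : 0 ≤ y) (k : ℕ) :
    y ^ k / Nat.factorial k ≤ Real.exp y := by
  have hexp : Real.exp y = ∑' n : ℕ, y ^ n / Nat.factorial n := by
    rw [Real.exp_eq_exp_ℝ, NormedSpace.exp_eq_tsum_div]
  rw [hexp]
  exact Summable.le_tsum (Real.summable_pow_div_factorial y) k (fun j _ => by positivity)

lemma sum_div3 (h : ℕ → ℝ) (K : ℕ) :
    ∑ n ∈ Finset.range (3*K), h (n/3) = 3 * ∑ k ∈ Finset.range K, h k := by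
  induction K with
  | zero => simp
  | succ K ih =>
    have : 3*(K+1) = 3*K + 1 + 1 + 1 := by ring
    rw [this, Finset.sum_range_succ, Finset.sum_range_succ, Finset.sum_range_succ, ih,
      Finset.sum_range_succ]
    have e1 : (3*K)/3 = K := by omega
    have e2 : (3*K+1)/3 = K := by omega
    have e3 : (3*K+1+1)/3 = K := by omega
    rw [e1, e2, e3]; ring

lemma sum_div3_le (h : ℕ → ℝ) (hpos : ∀ k, 0 ≤ h k) (hsum : Summable h) (N : ℕ) :
    ∑ n ∈ Finset.range N, h (n/3) ≤ 3 * ∑' k, h k := by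
  calc ∑ n ∈ Finset.range N, h (n/3) ≤ ∑ n ∈ Finset.range (3*N), h (n/3) := by
        apply Finset.sum_le_sum_of_subset_of_nonneg
        · exact Finset.range_subset_range.mpr (by omega)
        · exact fun i _ _ => hpos _
    _ = 3 * ∑ k ∈ Finset.range N, h k := sum_div3 h N
    _ ≤ 3 * ∑' k, h k := by
        have := Summable.sum_le_tsum (Finset.range N) (fun j _ => hpos j) hsum
        linarith

lemma fact_cube_le {k n : ℕ} (hn : 3*k ≤ n) :
    ((Nat.factorial k : ℝ))^3 ≤ Nat.factorial n := by
  have h1 : Nat.factorial k * Nat.factorial k ∣ Nat.factorial (2*k) := by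
    have := Nat.factorial_mul_factorial_dvd_factorial_add k k
    simpa [two_mul] using this
  have h2 : Nat.factorial k * Nat.factorial (2*k) ∣ Nat.factorial (3*k) := by
    have := Nat.factorial_mul_factorial_dvd_factorial_add k (2*k)
    have e : k + 2*k = 3*k := by ring
    rwa [e] at this
  have h3 : Nat.factorial k * (Nat.factorial k * Nat.factorial k) ∣ Nat.factorial (3*k) :=
    dvd_trans (mul_dvd_mul_left _ h1) h2
  have h4 : Nat.factorial k ^ 3 ≤ Nat.factorial (3*k) := by
    apply Nat.le_of_dvd (Nat.factorial_pos _)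
    have : Nat.factorial k ^ 3 = Nat.factorial k * (Nat.factorial k * Nat.factorial k) := by ring
    rwa [this]
  have h5 : Nat.factorial (3*k) ≤ Nat.factorial n := Nat.factorial_le hn
  exact_mod_cast le_trans h4 h5

lemma abs_u_le (hu : Differentiable ℂ u) (hairy : ∀ z : ℂ, deriv (deriv u) z = z * u z)
    {r : ℝ} (hr : 1 ≤ r) {z : ℂ} (hz : ‖z‖ = r) :
    ‖u z‖ ≤ 3 * (‖u 0‖ + ‖iteratedDeriv 1 u 0‖ + 1) * r^2 *
      Real.exp (2 * Real.sqrt (3*r^3)) := by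
  set A : ℝ := ‖u 0‖ + ‖iteratedDeriv 1 u 0‖ + 1 with hA
  have hA1 : (1:ℝ) ≤ A := by
    have := norm_nonneg (u 0); have := norm_nonneg (iteratedDeriv 1 u 0)
    simp only [hA]; linarith
  have hA0 : (0:ℝ) ≤ A := by linarith
  set s : ℝ := Real.sqrt (3*r^3) with hs
  have hr0 : (0:ℝ) < r := lt_of_lt_of_le one_pos hr
  have hs0 : 0 ≤ s := Real.sqrt_nonneg _
  have hssq : s^2 = 3*r^3 := Real.sq_sqrt (by positivity)
  -- term bound
  have hterm : ∀ n : ℕ, ‖(Nat.factorial n : ℂ)⁻¹ • z^n • iteratedDeriv n u 0‖ ≤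
      (A * r^2 * Real.exp s) * (s^(n/3) / Nat.factorial (n/3)) := by
    intro n
    set k := n/3 with hk
    have hnorm : ‖(Nat.factorial n : ℂ)⁻¹ • z^n • iteratedDeriv n u 0‖ =
        ‖iteratedDeriv n u 0‖ * r^n / Nat.factorial n := by
      rw [norm_smul, norm_smul, norm_inv, norm_pow]
      simp only [Complex.norm_natCast, hz]
      field_simp
    rw [hnorm]
    have h1 : ‖iteratedDeriv n u 0‖ ≤ A * 3^k * Nat.factorial k := by
      refine le_trans (c_upper hu hairy n) ?_
      apply mul_le_mul_of_nonneg_right _ (by positivity)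
      apply mul_le_mul_of_nonneg_right _ (by positivity)
      simp only [hA]; linarith
    have h2 : r^n ≤ r^(3*k+2) := pow_le_pow_right₀ hr (by omega)
    have h3 : ((Nat.factorial k : ℝ))^3 ≤ Nat.factorial n := fact_cube_le (by omega)
    have hstep : ‖iteratedDeriv n u 0‖ * r^n / Nat.factorial n ≤
        (A * 3^k * Nat.factorial k) * r^(3*k+2) / ((Nat.factorial k : ℝ))^3 := by
      apply div_le_div₀ (by positivity) _ (by positivity) h3
      exact mul_le_mul h1 h2 (by positivity) (by positivity)
    refine le_trans hstep ?_
    have heq : (A * 3^k * Nat.factorial k) * r^(3*k+2) / ((Nat.factorial k : ℝ))^3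
        = (A * r^2) * ((s^k/Nat.factorial k) * (s^k/Nat.factorial k)) := by
      have hfk : (0:ℝ) < Nat.factorial k := by positivity
      have : (s^k)*(s^k) = 3^k * r^(3*k) := by
        rw [← pow_add, ← two_mul, pow_mul, hssq, mul_pow, ← pow_mul]
      field_simp
      rw [sq (s^k), this]
      ring
    rw [heq]
    have hle : s^k/Nat.factorial k ≤ Real.exp s := pow_div_fact_le_exp hs0 k
    have h0 : 0 ≤ s^k/Nat.factorial k := by positivity
    calc (A * r^2) * ((s^k/Nat.factorial k) * (s^k/Nat.factorial k))
        ≤ (A * r^2) * (Real.exp s * (s^k/Nat.factorial k)) := by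
          apply mul_le_mul_of_nonneg_left _ (by positivity)
          exact mul_le_mul_of_nonneg_right hle h0
      _ = (A * r^2 * Real.exp s) * (s^(n/3) / Nat.factorial (n/3)) := by ring
  -- summability of majorant
  have hmaj : Summable (fun k : ℕ => s^k / (Nat.factorial k : ℝ)) :=
    Real.summable_pow_div_factorial s
  have hmajpos : ∀ k : ℕ, 0 ≤ s^k / (Nat.factorial k : ℝ) := fun k => by positivity
  have hpartial : ∀ N : ℕ, ∑ n ∈ Finset.range N,
      ‖(Nat.factorial n : ℂ)⁻¹ • z^n • iteratedDeriv n u 0‖ ≤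
      (A * r^2 * Real.exp s) * (3 * Real.exp s) := by
    intro N
    calc ∑ n ∈ Finset.range N, ‖(Nat.factorial n : ℂ)⁻¹ • z^n • iteratedDeriv n u 0‖
        ≤ ∑ n ∈ Finset.range N, (A * r^2 * Real.exp s) * (s^(n/3) / Nat.factorial (n/3)) :=
          Finset.sum_le_sum (fun n _ => hterm n)
      _ = (A * r^2 * Real.exp s) * ∑ n ∈ Finset.range N, (s^(n/3) / Nat.factorial (n/3)) := by
          rw [Finset.mul_sum]
      _ ≤ (A * r^2 * Real.exp s) * (3 * ∑' k : ℕ, s^k / Nat.factorial k) := by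
          apply mul_le_mul_of_nonneg_left _ (by positivity)
          exact sum_div3_le _ hmajpos hmaj N
      _ ≤ (A * r^2 * Real.exp s) * (3 * Real.exp s) := by
          apply mul_le_mul_of_nonneg_left _ (by positivity)
          have : ∑' k : ℕ, s^k / (Nat.factorial k : ℝ) ≤ Real.exp s := by
            rw [Real.exp_eq_exp_ℝ, NormedSpace.exp_eq_tsum_div]
          linarith
  have hsumnorm : Summable (fun n : ℕ => ‖(Nat.factorial n : ℂ)⁻¹ • z^n • iteratedDeriv n u 0‖) :=
    summable_of_sum_range_le (fun n => norm_nonneg _) hpartial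
  have htay := Complex.taylorSeries_eq_of_entire hu 0 z
  simp only [sub_zero] at htay
  have habs : ‖u z‖ = ‖u z‖ := rfl
  rw [habs, ← htay]
  refine le_trans (norm_tsum_le_tsum_norm hsumnorm) ?_
  refine le_trans (Summable.tsum_le_of_sum_range_le hsumnorm hpartial) (le_of_eq ?_)
  rw [two_mul, Real.exp_add]
  ring

lemma M_bddAbove (hu : Differentiable ℂ u) (r : ℝ) :
    BddAbove ((fun z => ‖u z‖) '' sphere (0:ℂ) r) :=
  ((isCompact_sphere (0:ℂ) r).image
    (continuous_norm.comp hu.continuous)).bddAbove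

lemma le_M (hu : Differentiable ℂ u) {r : ℝ} {z : ℂ} (hz : z ∈ sphere (0:ℂ) r) :
    ‖u z‖ ≤ sSup ((fun z => ‖u z‖) '' sphere (0:ℂ) r) :=
  le_csSup (M_bddAbove hu r) (Set.mem_image_of_mem _ hz)

lemma M_upper (hu : Differentiable ℂ u) (hairy : ∀ z : ℂ, deriv (deriv u) z = z * u z)
    {r : ℝ} (hr : 1 ≤ r) :
    sSup ((fun z => ‖u z‖) '' sphere (0:ℂ) r) ≤
      3 * (‖u 0‖ + ‖iteratedDeriv 1 u 0‖ + 1) * r^2 *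
        Real.exp (2 * Real.sqrt (3*r^3)) := by
  apply csSup_le
  · exact ((NormedSpace.sphere_nonempty.mpr (by linarith)).image _)
  · rintro x ⟨z, hz, rfl⟩
    exact abs_u_le hu hairy hr (mem_sphere_zero_iff_norm.mp hz)

lemma M_lower (hu : Differentiable ℂ u) {r : ℝ} (hr : 0 < r) (n : ℕ) :
    ‖iteratedDeriv n u 0‖ * r ^ n / Nat.factorial n ≤
      sSup ((fun z => ‖u z‖) '' sphere (0:ℂ) r) := by
  have := cauchy_est hu hr (fun z hz => le_M hu hz) n
  rw [div_le_iff₀ (by positivity)]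
  calc ‖iteratedDeriv n u 0‖ * r ^ n
      ≤ Nat.factorial n * sSup ((fun z => ‖u z‖) '' sphere (0:ℂ) r) := this
    _ = _ := by ring

lemma fact_ratio : ∀ (k m : ℕ), Nat.factorial (k+m) ≤ Nat.factorial k * (k+m)^m := by
  intro k m
  induction m with
  | zero => simp
  | succ m ih =>
    have h1 : Nat.factorial (k+(m+1)) = (k+m+1) * Nat.factorial (k+m) := by
      rw [show k+(m+1) = (k+m)+1 from rfl, Nat.factorial_succ]
    rw [h1]
    calc (k+m+1) * Nat.factorial (k+m) ≤ (k+m+1) * (Nat.factorial k * (k+m)^m) :=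
          Nat.mul_le_mul_left _ ih
      _ ≤ (k+m+1) * (Nat.factorial k * (k+m+1)^m) := by
          apply Nat.mul_le_mul_left
          apply Nat.mul_le_mul_left
          exact Nat.pow_le_pow_left (by omega) m
      _ = Nat.factorial k * (k+(m+1))^(m+1) := by ring_nf
  
lemma exists_nonzero (hu : Differentiable ℂ u) (hu0 : u ≠ 0)
    (hairy : ∀ z : ℂ, deriv (deriv u) z = z * u z) :
    ∃ i : ℕ, i < 3 ∧ iteratedDeriv i u 0 ≠ 0 := by
  by_contra hcon
  push_neg at hcon
  have hall : ∀ n : ℕ, iteratedDeriv n u 0 = 0 := by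
    intro n
    induction n using Nat.strong_induction_on with
    | _ n ih =>
      match n with
      | 0 => exact hcon 0 (by omega)
      | 1 => exact hcon 1 (by omega)
      | 2 => exact hcon 2 (by omega)
      | (m+3) => rw [c_rec hu hairy m, ih m (by omega), mul_zero]
  apply hu0
  funext z
  have htay := Complex.taylorSeries_eq_of_entire hu 0 z
  simp only [sub_zero, hall, smul_zero, tsum_zero] at htay
  simp [← htay]


lemma eventually_log_small (b : ℝ) : ∀ᶠ r : ℝ in atTop,
    b + 3*Real.log r ≤ r^((3:ℝ)/2)/56 := by
  have h32 : (0:ℝ) < 3/2 := by norm_num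
  have hlo := (isLittleO_log_rpow_atTop h32).def (show (0:ℝ) < 1/336 by norm_num)
  have hc : ∀ᶠ r : ℝ in atTop, b ≤ r^((3:ℝ)/2)/112 :=
    (Filter.Tendsto.atTop_div_const (by norm_num) (tendsto_rpow_atTop h32)).eventually_ge_atTop b
  filter_upwards [hlo, hc, eventually_ge_atTop (1:ℝ)] with r h1 h2 h3
  have ht0 : (0:ℝ) ≤ r^((3:ℝ)/2) := Real.rpow_nonneg (by linarith) _
  have hlog : Real.log r ≤ (1/336) * r^((3:ℝ)/2) := by
    have h1' : |Real.log r| ≤ 1/336 * |r^((3:ℝ)/2)| := h1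
    rw [_root_.abs_of_nonneg ht0] at h1'
    exact le_trans (le_abs_self _) h1'
  linarith

lemma arith_lower (b t K I L Ln l9 : ℝ) (hK0 : 0 ≤ K) (hI0 : 0 ≤ I) (hI2 : I ≤ 2)
    (hL0 : 0 ≤ L) (hl9 : 2 ≤ l9) (hLn : Ln ≤ (3/2)*L - l9)
    (hkt2 : t/28 - 1 ≤ K) (h56 : 4 - b + 3*L ≤ t/56) :
    t/8 ≤ b + (3*K+I)*L - (2*K+I)*Ln := by
  have q1 : (2*K+I)*Ln ≤ (2*K+I)*((3/2)*L - l9) :=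
    mul_le_mul_of_nonneg_left hLn (by linarith)
  have q1' : (2*K+I)*((3/2)*L - l9) = 3*(K*L) + (3/2)*(I*L) - 2*(K*l9) - I*l9 := by ring
  have q2 : I*L ≤ 2*L := mul_le_mul_of_nonneg_right hI2 hL0
  have q3 : K*2 ≤ K*l9 := mul_le_mul_of_nonneg_left hl9 hK0
  have q4 : 0 ≤ I*l9 := mul_nonneg hI0 (by linarith)
  have q5 : (3*K+I)*L = 3*(K*L) + I*L := by ring
  linarith

lemma logM_lower (hu : Differentiable ℂ u) (hu0 : u ≠ 0)
    (hairy : ∀ z : ℂ, deriv (deriv u) z = z * u z) :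
    ∀ᶠ r : ℝ in atTop, r^((3:ℝ)/2)/8 ≤
      Real.log (sSup ((fun z => ‖u z‖) '' sphere (0:ℂ) r)) := by
  obtain ⟨i, hi3, hci⟩ := exists_nonzero hu hu0 hairy
  have hb : 0 < ‖iteratedDeriv i u 0‖ := norm_pos_iff.mpr hci
  have h32 : (0:ℝ) < 3/2 := by norm_num
  have hE2 : ∀ᶠ r : ℝ in atTop, 504 ≤ r^((3:ℝ)/2) :=
    (tendsto_rpow_atTop h32).eventually_ge_atTop 504
  filter_upwards [eventually_ge_atTop (1:ℝ), hE2,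
    eventually_log_small (4 - Real.log (‖iteratedDeriv i u 0‖))]
    with r h1 h2 h3
  have hr0 : (0:ℝ) < r := by linarith
  have ht0 : (0:ℝ) < r^((3:ℝ)/2) := Real.rpow_pos_of_pos hr0 _
  obtain ⟨k, hkdef⟩ : ∃ k : ℕ, k = ⌊r^((3:ℝ)/2)/28⌋₊ := ⟨_, rfl⟩
  have hkt : (k:ℝ) ≤ r^((3:ℝ)/2)/28 := hkdef ▸ Nat.floor_le (by positivity)
  have hkt2 : r^((3:ℝ)/2)/28 - 1 ≤ (k:ℝ) := by
    have := Nat.lt_floor_add_one (r^((3:ℝ)/2)/28)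
    rw [← hkdef] at this
    linarith
  have hk1 : 1 ≤ k := by
    rw [hkdef]
    apply Nat.le_floor
    push_cast
    linarith
  obtain ⟨n, hndef⟩ : ∃ n : ℕ, n = 3*k + i := ⟨_, rfl⟩
  have hn1 : 1 ≤ n := by omega
  have hn0R : (0:ℝ) < (n:ℝ) := by exact_mod_cast hn1
  have hiR : (i:ℝ) ≤ 2 := by exact_mod_cast Nat.lt_succ_iff.mp hi3
  have hnR : (n:ℝ) = 3*(k:ℝ) + (i:ℝ) := by rw [hndef]; push_cast; ring
  have hnt : (n:ℝ) ≤ r^((3:ℝ)/2)/9 := by rw [hnR]; linarith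
  have hM1 : ‖iteratedDeriv n u 0‖ * r ^ n / Nat.factorial n ≤
      sSup ((fun z => ‖u z‖) '' sphere (0:ℂ) r) := M_lower hu hr0 n
  have hclow : ‖iteratedDeriv i u 0‖ * Nat.factorial k ≤
      ‖iteratedDeriv n u 0‖ := by
    have := c_lower hu hairy i hi3 k
    rwa [← hndef] at this
  have hfr : (Nat.factorial n : ℝ) ≤ Nat.factorial k * ((n:ℝ))^(2*k+i) := by
    have h0 := fact_ratio k (2*k+i)
    have he : k + (2*k+i) = n := by omega
    rw [he] at h0
    exact_mod_cast h0
  have hX : ‖iteratedDeriv i u 0‖ * r^n / ((n:ℝ))^(2*k+i) ≤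
      sSup ((fun z => ‖u z‖) '' sphere (0:ℂ) r) := by
    refine le_trans ?_ hM1
    rw [div_le_div_iff₀ (by positivity) (by positivity)]
    calc ‖iteratedDeriv i u 0‖ * r^n * Nat.factorial n
        ≤ ‖iteratedDeriv i u 0‖ * r^n * (Nat.factorial k * ((n:ℝ))^(2*k+i)) := by
          apply mul_le_mul_of_nonneg_left hfr (by positivity)
      _ = (‖iteratedDeriv i u 0‖ * Nat.factorial k) * r^n * ((n:ℝ))^(2*k+i) := by
          ring
      _ ≤ ‖iteratedDeriv n u 0‖ * r^n * ((n:ℝ))^(2*k+i) := by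
          apply mul_le_mul_of_nonneg_right _ (by positivity)
          exact mul_le_mul_of_nonneg_right hclow (by positivity)
  have hXpos : (0:ℝ) < ‖iteratedDeriv i u 0‖ * r^n / ((n:ℝ))^(2*k+i) := by
    positivity
  have hlogM := Real.log_le_log hXpos hX
  have hlogX : Real.log (‖iteratedDeriv i u 0‖ * r^n / ((n:ℝ))^(2*k+i))
      = Real.log (‖iteratedDeriv i u 0‖) + (n:ℝ) * Real.log r
        - ((2*k+i : ℕ):ℝ) * Real.log (n:ℝ) := by
    rw [Real.log_div (by positivity) (by positivity), Real.log_mul (by positivity) (by positivity),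
      Real.log_pow, Real.log_pow]
    try push_cast
    try ring
  have hlogr0 : 0 ≤ Real.log r := Real.log_nonneg h1
  have hlogt : Real.log (r^((3:ℝ)/2)) = (3/2) * Real.log r := Real.log_rpow hr0 _
  have hlog9 : (2:ℝ) ≤ Real.log 9 := by
    have h3e : Real.exp 1 < 3 := by
      have := Real.exp_one_lt_d9
      linarith
    have hl3 : (1:ℝ) < Real.log 3 := (Real.lt_log_iff_exp_lt (by norm_num)).mpr h3e
    have h9 : Real.log 9 = 2 * Real.log 3 := by
      rw [show (9:ℝ) = 3^2 by norm_num, Real.log_pow]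
      push_cast; ring
    linarith
  have hlogn : Real.log (n:ℝ) ≤ (3/2) * Real.log r - Real.log 9 := by
    calc Real.log (n:ℝ) ≤ Real.log (r^((3:ℝ)/2)/9) := Real.log_le_log hn0R hnt
      _ = Real.log (r^((3:ℝ)/2)) - Real.log 9 := Real.log_div (by positivity) (by norm_num)
      _ = (3/2) * Real.log r - Real.log 9 := by rw [hlogt]
  have harith := arith_lower (Real.log (‖iteratedDeriv i u 0‖)) (r^((3:ℝ)/2))
    (k:ℝ) (i:ℝ) (Real.log r) (Real.log (n:ℝ)) (Real.log 9)
    (by positivity) (by positivity) hiR hlogr0 hlog9 hlogn hkt2 h3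
  rw [hlogX] at hlogM
  refine le_trans harith (le_trans (le_of_eq ?_) hlogM)
  rw [hnR]
  push_cast
  ring

lemma logM_upper (hu : Differentiable ℂ u)
    (hairy : ∀ z : ℂ, deriv (deriv u) z = z * u z) :
    ∀ᶠ r : ℝ in atTop,
      Real.log (sSup ((fun z => ‖u z‖) '' sphere (0:ℂ) r)) ≤ 8 * r^((3:ℝ)/2) := by
  set A : ℝ := ‖u 0‖ + ‖iteratedDeriv 1 u 0‖ + 1 with hA
  have hA1 : (1:ℝ) ≤ A := by
    have := norm_nonneg (u 0); have := norm_nonneg (iteratedDeriv 1 u 0)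
    simp only [hA]; linarith
  filter_upwards [eventually_ge_atTop (1:ℝ), eventually_log_small (Real.log (3*A))]
    with r h1 h2
  have hr0 : (0:ℝ) < r := by linarith
  have ht0 : (0:ℝ) < r^((3:ℝ)/2) := Real.rpow_pos_of_pos hr0 _
  have hlogr0 : 0 ≤ Real.log r := Real.log_nonneg h1
  have hMle := M_upper hu hairy h1
  have hM0 : 0 ≤ sSup ((fun z => ‖u z‖) '' sphere (0:ℂ) r) := by
    obtain ⟨z, hz⟩ : (sphere (0:ℂ) r).Nonempty := NormedSpace.sphere_nonempty.mpr (by linarith)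
    exact le_trans (norm_nonneg _) (le_M hu hz)
  have hsle : Real.sqrt (3*r^3) ≤ 2 * r^((3:ℝ)/2) := by
    have hs1 : Real.sqrt (3*r^3) ≤ Real.sqrt (4*r^3) := by
      apply Real.sqrt_le_sqrt
      nlinarith
    have hs2 : Real.sqrt (4*r^3) = 2 * Real.sqrt (r^3) := by
      rw [Real.sqrt_mul (by norm_num), show (4:ℝ) = 2^2 by norm_num,
        Real.sqrt_sq (by norm_num)]
    have hs3 : Real.sqrt (r^3) = r^((3:ℝ)/2) := by
      rw [show r^3 = r^((3:ℝ)) by rw [← Real.rpow_natCast r 3]; norm_num,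
        Real.sqrt_eq_rpow, ← Real.rpow_mul hr0.le]
      norm_num
    rw [hs2, hs3] at hs1
    exact hs1
  rcases eq_or_lt_of_le hM0 with hM | hM
  · rw [← hM, Real.log_zero]
    positivity
  · refine le_trans (Real.log_le_log hM hMle) ?_
    have hexp : Real.log (3 * A * r^2 * Real.exp (2 * Real.sqrt (3*r^3)))
        = Real.log (3*A) + 2 * Real.log r + 2 * Real.sqrt (3*r^3) := by
      rw [Real.log_mul (by positivity) (Real.exp_ne_zero _), Real.log_mul (by positivity)
        (by positivity), Real.log_exp, Real.log_pow]
      push_cast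
      ring
    rw [hexp]
    have : Real.log (3*A) + 3 * Real.log r ≤ r^((3:ℝ)/2)/56 := h2
    linarith


end AiryAux

section Main

open Complex Metric

theorem airy_solution_order_three_halves (u : ℂ → ℂ) (hu : Differentiable ℂ u)
    (hu0 : u ≠ 0) (hairy : ∀ z : ℂ, deriv (deriv u) z = z * u z) :
    entireOrder u = 3 / 2 := by
  have hG : Tendsto (fun r : ℝ => Real.log 8 / Real.log r) atTop (nhds 0) :=
    Filter.Tendsto.div_atTop tendsto_const_nhds Real.tendsto_log_atTop
  have hG1 : Tendsto (fun r : ℝ => 3/2 - Real.log 8 / Real.log r) atTop (nhds (3/2)) := by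
    simpa using tendsto_const_nhds.sub hG
  have hG2 : Tendsto (fun r : ℝ => 3/2 + Real.log 8 / Real.log r) atTop (nhds (3/2)) := by
    simpa using tendsto_const_nhds.add hG
  have hlower := logM_lower hu hu0 hairy
  have hupper := logM_upper hu hairy
  have hsq1 : ∀ᶠ r : ℝ in atTop, 3/2 - Real.log 8 / Real.log r ≤
      Real.log (Real.log (sSup ((fun z => ‖u z‖) '' Metric.sphere (0 : ℂ) r))) /
        Real.log r := by
    filter_upwards [hlower, eventually_ge_atTop (3:ℝ)] with r hlow hr3
    have hr0 : (0:ℝ) < r := by linarith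
    have hL : 0 < Real.log r := Real.log_pos (by linarith)
    have ht0 : (0:ℝ) < r^((3:ℝ)/2) := Real.rpow_pos_of_pos hr0 _
    have hnum : (3/2) * Real.log r - Real.log 8 ≤
        Real.log (Real.log (sSup ((fun z => ‖u z‖) '' Metric.sphere (0 : ℂ) r))) := by
      have h0 : (0:ℝ) < r^((3:ℝ)/2)/8 := by positivity
      have := Real.log_le_log h0 hlow
      rw [Real.log_div (by positivity) (by norm_num), Real.log_rpow hr0] at this
      linarith
    calc 3/2 - Real.log 8 / Real.log r
        = ((3/2) * Real.log r - Real.log 8) / Real.log r := by field_simp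
      _ ≤ _ := (div_le_div_iff_of_pos_right hL).mpr hnum
  have hsq2 : ∀ᶠ r : ℝ in atTop,
      Real.log (Real.log (sSup ((fun z => ‖u z‖) '' Metric.sphere (0 : ℂ) r))) /
        Real.log r ≤ 3/2 + Real.log 8 / Real.log r := by
    filter_upwards [hlower, hupper, eventually_ge_atTop (3:ℝ)] with r hlow hup hr3
    have hr0 : (0:ℝ) < r := by linarith
    have hL : 0 < Real.log r := Real.log_pos (by linarith)
    have ht0 : (0:ℝ) < r^((3:ℝ)/2) := Real.rpow_pos_of_pos hr0 _
    have hMpos : 0 < Real.log (sSup ((fun z => ‖u z‖) '' Metric.sphere (0 : ℂ) r)) :=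
      lt_of_lt_of_le (by positivity) hlow
    have hnum : Real.log (Real.log (sSup ((fun z => ‖u z‖) ''
        Metric.sphere (0 : ℂ) r))) ≤ Real.log 8 + (3/2) * Real.log r := by
      have := Real.log_le_log hMpos hup
      rw [Real.log_mul (by norm_num) (by positivity), Real.log_rpow hr0] at this
      linarith
    calc Real.log (Real.log (sSup ((fun z => ‖u z‖) ''
          Metric.sphere (0 : ℂ) r))) / Real.log r
        ≤ (Real.log 8 + (3/2) * Real.log r) / Real.log r := (div_le_div_iff_of_pos_right hL).mpr hnum
      _ = 3/2 + Real.log 8 / Real.log r := by field_simp; ring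
  have htendsto : Tendsto (fun r : ℝ =>
      Real.log (Real.log (sSup ((fun z => ‖u z‖) '' Metric.sphere (0 : ℂ) r))) /
        Real.log r) atTop (nhds (3/2)) :=
    tendsto_of_tendsto_of_tendsto_of_le_of_le' hG1 hG2 hsq1 hsq2
  exact htendsto.limsup_eq

end Main
end

section
/- Let D_Airy = ∂/∂z + y₂·∂/∂y₁ + z·y₁·∂/∂y₂ act on ℂ[z,y₁,y₂]. If p ∈ ℂ[z,y₁,y₂] satisfies that D_Airy(p) is divisible by p in ℂ[z,y₁,y₂], then p is a constant. -/
open MvPolynomial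

/-- The Airy derivation `D_Airy = ∂/∂z + y₂·∂/∂y₁ + z·y₁·∂/∂y₂` on `ℂ[z,y₁,y₂]`,
with variables indexed as `z = X 0`, `y₁ = X 1`, `y₂ = X 2`. -/
noncomputable def DAiry (p : MvPolynomial (Fin 3) ℂ) : MvPolynomial (Fin 3) ℂ :=
  pderiv 0 p + X 2 * pderiv 1 p + X 0 * X 1 * pderiv 2 p

namespace AiryAux

open Finsupp

abbrev R3 := MvPolynomial (Fin 3) ℂ

/-- main weights -/
def wA : Fin 3 → ℕ := ![2, 2, 3]
/-- y-degree weights -/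
def wY : Fin 3 → ℕ := ![0, 1, 1]

lemma weight_eval (w : Fin 3 → ℕ) (m : Fin 3 →₀ ℕ) :
    Finsupp.weight w m = m 0 * w 0 + m 1 * w 1 + m 2 * w 2 := by
  rw [Finsupp.weight_apply, Finsupp.sum_fintype]
  · simp [Fin.sum_univ_three, mul_comm]
  · intro i; simp

lemma wA_eval (m : Fin 3 →₀ ℕ) :
    Finsupp.weight wA m = 2 * m 0 + 2 * m 1 + 3 * m 2 := by
  rw [weight_eval]; simp [wA]; ring

lemma wY_eval (m : Fin 3 →₀ ℕ) :
    Finsupp.weight wY m = m 1 + m 2 := by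
  rw [weight_eval]; simp [wY]

lemma exists_decomp (m : Fin 3 →₀ ℕ) (j : Fin 3) (h : m j ≠ 0) :
    ∃ m', m = m' + Finsupp.single j 1 := by
  refine ⟨m - Finsupp.single j 1, ?_⟩
  ext t
  simp only [Finsupp.add_apply, Finsupp.tsub_apply, Finsupp.single_apply]
  by_cases ht : j = t
  · subst ht; simp only [eq_self_iff_true, if_true, if_pos rfl]
    omega
  · simp only [if_neg ht]
    omega

lemma coeff_pderiv (i : Fin 3) (h : R3) (m : Fin 3 →₀ ℕ) :
    coeff m (pderiv i h) = ((m i : ℂ) + 1) * coeff (m + Finsupp.single i 1) h := by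
  induction h using MvPolynomial.induction_on' with
  | add p q hp hq =>
    simp only [map_add, coeff_add, hp, hq]; ring
  | monomial s a =>
    rw [pderiv_monomial]
    by_cases hsi : s i = 0
    · have hne : s ≠ m + Finsupp.single i 1 := by
        intro hcon
        rw [hcon] at hsi
        simp [Finsupp.add_apply, Finsupp.single_apply] at hsi
      rw [coeff_monomial, coeff_monomial, if_neg hne, hsi]
      simp
    · have hiff : (s - Finsupp.single i 1 = m) ↔ (s = m + Finsupp.single i 1) := by
        constructor
        · intro he
          ext t
          have := congrArg (fun f => f t) he
          simp only [Finsupp.tsub_apply, Finsupp.single_apply, Finsupp.add_apply] at this ⊢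
          by_cases ht : i = t
          · subst ht
            simp only [eq_self_iff_true, if_true, if_pos rfl] at this ⊢
            omega
          · simp only [if_neg ht] at this ⊢; omega
        · intro he
          subst he
          ext t
          simp only [Finsupp.tsub_apply, Finsupp.single_apply, Finsupp.add_apply]
          omega
      rw [coeff_monomial, coeff_monomial]
      by_cases hs : s = m + Finsupp.single i 1
      · rw [if_pos (hiff.mpr hs), if_pos hs, hs]
        simp only [Finsupp.add_apply, Finsupp.single_apply, if_pos rfl]
        push_cast
        ring
      · rw [if_neg (fun hcon => hs (hiff.mp hcon)), if_neg hs, mul_zero]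

lemma coeff_X_mul_zero (j : Fin 3) (g : R3) (m : Fin 3 →₀ ℕ) (hm : m j = 0) :
    coeff m (X j * g) = 0 := by
  classical
  rw [coeff_X_mul']
  rw [if_neg]
  simp [Finsupp.mem_support_iff, hm]

lemma coeff_X_mul_diag (i : Fin 3) (g : R3) (m : Fin 3 →₀ ℕ) :
    coeff m (X i * pderiv i g) = (m i : ℂ) * coeff m g := by
  by_cases hm : m i = 0
  · rw [coeff_X_mul_zero i _ m hm, hm]; simp
  · obtain ⟨m', rfl⟩ := exists_decomp m i hm
    rw [add_comm m' (Finsupp.single i 1), coeff_X_mul, coeff_pderiv]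
    rw [add_comm (Finsupp.single i 1) m']
    congr 1
    simp [Finsupp.add_apply, Finsupp.single_apply]

@[simp] lemma wA0 : wA 0 = 2 := rfl
@[simp] lemma wA1 : wA 1 = 2 := rfl
@[simp] lemma wA2 : wA 2 = 3 := rfl
@[simp] lemma wY0 : wY 0 = 0 := rfl
@[simp] lemma wY1 : wY 1 = 1 := rfl
@[simp] lemma wY2 : wY 2 = 1 := rfl

lemma weight_single_one (w : Fin 3 → ℕ) (i : Fin 3) :
    Finsupp.weight w (Finsupp.single i 1) = w i := by
  rw [weight_eval]
  by_cases h0 : i = 0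
  · subst h0; simp [Finsupp.single_apply]
  · by_cases h1 : i = 1
    · subst h1; simp [Finsupp.single_apply]
    · have h2 : i = 2 := by omega
      subst h2; simp [Finsupp.single_apply]

lemma comp_pd0 (w : Fin 3 → ℕ) (a l : ℕ) (H : ∀ t : ℕ, t + w 0 = l ↔ t = a) (h : R3) :
    pderiv 0 (weightedHomogeneousComponent w l h) =
      weightedHomogeneousComponent w a (pderiv 0 h) := by
  ext m
  rw [coeff_pderiv, coeff_weightedHomogeneousComponent, coeff_weightedHomogeneousComponent,
    coeff_pderiv]
  have hw : Finsupp.weight w (m + Finsupp.single 0 1) = Finsupp.weight w m + w 0 := by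
    rw [map_add, weight_single_one]
  rw [hw]
  by_cases hm : Finsupp.weight w m = a
  · rw [if_pos ((H _).mpr hm), if_pos hm]
  · rw [if_neg (fun hcon => hm ((H _).mp hcon)), if_neg hm, mul_zero]

lemma comp_X_pderiv (w : Fin 3 → ℕ) (j i : Fin 3) (a l : ℕ)
    (H : ∀ t : ℕ, t + w i = l ↔ t + w j = a) (h : R3) :
    X j * pderiv i (weightedHomogeneousComponent w l h) =
      weightedHomogeneousComponent w a (X j * pderiv i h) := by
  ext m
  rw [coeff_weightedHomogeneousComponent]
  by_cases hm : m j = 0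
  · simp [coeff_X_mul_zero _ _ _ hm]
  · obtain ⟨m', rfl⟩ := exists_decomp m j hm
    rw [add_comm m' (Finsupp.single j 1), coeff_X_mul, coeff_X_mul, coeff_pderiv, coeff_pderiv,
      coeff_weightedHomogeneousComponent]
    have hw1 : Finsupp.weight w (m' + Finsupp.single i 1) = Finsupp.weight w m' + w i := by
      rw [map_add, weight_single_one]
    have hw2 : Finsupp.weight w (Finsupp.single j 1 + m') = Finsupp.weight w m' + w j := by
      rw [map_add, weight_single_one, add_comm]
    rw [hw1, hw2]
    by_cases hcond : Finsupp.weight w m' + w i = l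
    · rw [if_pos hcond, if_pos ((H _).mp hcond)]
    · rw [if_neg hcond, if_neg (fun hcon => hcond ((H _).mpr hcon)), mul_zero]

lemma comp_XX_pderiv (w : Fin 3 → ℕ) (j1 j2 i : Fin 3) (a l : ℕ)
    (H : ∀ t : ℕ, t + w i = l ↔ t + w j2 + w j1 = a) (h : R3) :
    X j1 * (X j2 * pderiv i (weightedHomogeneousComponent w l h)) =
      weightedHomogeneousComponent w a (X j1 * (X j2 * pderiv i h)) := by
  ext m
  rw [coeff_weightedHomogeneousComponent]
  by_cases hm1 : m j1 = 0
  · simp [coeff_X_mul_zero _ _ _ hm1]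
  · obtain ⟨m', rfl⟩ := exists_decomp m j1 hm1
    rw [add_comm m' (Finsupp.single j1 1), coeff_X_mul, coeff_X_mul]
    by_cases hm2 : m' j2 = 0
    · simp [coeff_X_mul_zero _ _ _ hm2]
    · obtain ⟨m'', rfl⟩ := exists_decomp m' j2 hm2
      rw [add_comm m'' (Finsupp.single j2 1), coeff_X_mul, coeff_X_mul, coeff_pderiv,
        coeff_pderiv, coeff_weightedHomogeneousComponent]
      have hw1 : Finsupp.weight w (m'' + Finsupp.single i 1) = Finsupp.weight w m'' + w i := by
        rw [map_add, weight_single_one]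
      have hw2 : Finsupp.weight w (Finsupp.single j1 1 + (Finsupp.single j2 1 + m'')) =
          Finsupp.weight w m'' + w j2 + w j1 := by
        rw [map_add, map_add, weight_single_one, weight_single_one]; ring
      rw [hw1, hw2]
      by_cases hcond : Finsupp.weight w m'' + w i = l
      · rw [if_pos hcond, if_pos ((H _).mp hcond)]
      · rw [if_neg hcond, if_neg (fun hcon => hcond ((H _).mpr hcon)), mul_zero]

lemma hcA_zero_X2 (g : R3) :
    weightedHomogeneousComponent wA 0 (X 2 * g) = 0 := by
  ext m
  simp only [coeff_zero, coeff_weightedHomogeneousComponent]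
  by_cases hm : Finsupp.weight wA m = 0
  · rw [if_pos hm]
    have h2 : m 2 = 0 := by rw [wA_eval] at hm; omega
    exact coeff_X_mul_zero _ _ _ h2
  · rw [if_neg hm]

lemma hcA_zero_X01 (g : R3) :
    weightedHomogeneousComponent wA 0 (X 0 * g) = 0 := by
  ext m
  simp only [coeff_zero, coeff_weightedHomogeneousComponent]
  by_cases hm : Finsupp.weight wA m = 0
  · rw [if_pos hm]
    have h2 : m 0 = 0 := by rw [wA_eval] at hm; omega
    exact coeff_X_mul_zero _ _ _ h2
  · rw [if_neg hm]

lemma masterA (h : R3) (k : ℕ) :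
    weightedHomogeneousComponent wA (k + 1) (DAiry h) =
      pderiv 0 (weightedHomogeneousComponent wA (k + 3) h) +
        X 2 * pderiv 1 (weightedHomogeneousComponent wA k h) +
        X 0 * X 1 * pderiv 2 (weightedHomogeneousComponent wA k h) := by
  rw [DAiry, map_add, map_add]
  congr 1
  · congr 1
    · exact (comp_pd0 wA (k + 1) (k + 3) (by intro t; simp only [wA0]; omega) h).symm
    · exact (comp_X_pderiv wA 2 1 (k + 1) k
        (by intro t; simp only [wA1, wA2]; omega) h).symm
  · rw [mul_assoc, mul_assoc]
    exact (comp_XX_pderiv wA 0 1 2 (k + 1) k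
      (by intro t; simp only [wA0, wA1, wA2]; omega) h).symm

lemma masterB (h : R3) :
    weightedHomogeneousComponent wA 0 (DAiry h) =
      pderiv 0 (weightedHomogeneousComponent wA 2 h) := by
  rw [DAiry, map_add, map_add, hcA_zero_X2, mul_assoc, hcA_zero_X01, add_zero, add_zero]
  exact (comp_pd0 wA 0 2 (by intro t; simp only [wA0]; omega) h).symm

lemma masterY (h : R3) (n : ℕ) :
    weightedHomogeneousComponent wY n (DAiry h) =
      DAiry (weightedHomogeneousComponent wY n h) := by
  rw [DAiry, DAiry, map_add, map_add]
  congr 1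
  · congr 1
    · exact (comp_pd0 wY n n (by intro t; simp only [wY0, Nat.add_zero]) h).symm
    · exact (comp_X_pderiv wY 2 1 n n (by intro t; simp only [wY1, wY2]) h).symm
  · rw [mul_assoc, mul_assoc]
    exact (comp_XX_pderiv wY 0 1 2 n n
      (by intro t; simp only [wY0, wY1, wY2, Nat.add_zero]) h).symm

lemma exists_top (w : Fin 3 → ℕ) (p : R3) (hp : p ≠ 0) :
    ∃ m, coeff m p ≠ 0 ∧ Finsupp.weight w m = weightedTotalDegree w p := by
  obtain ⟨m, hm, he⟩ := Finset.exists_mem_eq_sup p.support (support_nonempty.mpr hp)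
    (fun s => Finsupp.weight w s)
  exact ⟨m, MvPolynomial.mem_support_iff.mp hm, he.symm⟩

lemma hc_top_ne_zero (w : Fin 3 → ℕ) (p : R3) (hp : p ≠ 0) :
    weightedHomogeneousComponent w (weightedTotalDegree w p) p ≠ 0 := by
  classical
  obtain ⟨m, hm, he⟩ := exists_top w p hp
  intro hcon
  have := congrArg (coeff m) hcon
  rw [coeff_weightedHomogeneousComponent, if_pos he, coeff_zero] at this
  exact hm this

lemma hc_mul_zero_of_lt (w : Fin 3 → ℕ) (a b : R3) (A B K : ℕ)
    (ha : ∀ m, coeff m a ≠ 0 → Finsupp.weight w m ≤ A)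
    (hb : ∀ m, coeff m b ≠ 0 → Finsupp.weight w m < B) (hK : A + B ≤ K) :
    weightedHomogeneousComponent w K (a * b) = 0 := by
  classical
  apply weightedHomogeneousComponent_eq_zero'
  intro d hd hw
  obtain ⟨d1, h1, d2, h2, rfl⟩ := Finset.mem_add.mp (support_mul a b hd)
  have hadd : Finsupp.weight w d1 + Finsupp.weight w d2 = K := by
    rw [← map_add]; exact hw
  have l1 := ha d1 (MvPolynomial.mem_support_iff.mp h1)
  have l2 := hb d2 (MvPolynomial.mem_support_iff.mp h2)
  omega

lemma coeff_sub_hc (w : Fin 3 → ℕ) (p : R3) (m : Fin 3 →₀ ℕ)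
    (h : coeff m (p - weightedHomogeneousComponent w (weightedTotalDegree w p) p) ≠ 0) :
    Finsupp.weight w m < weightedTotalDegree w p := by
  classical
  rw [coeff_sub, coeff_weightedHomogeneousComponent] at h
  by_cases hm : Finsupp.weight w m = weightedTotalDegree w p
  · rw [if_pos hm, sub_self] at h; exact absurd rfl h
  · rw [if_neg hm, sub_zero] at h
    exact lt_of_le_of_ne (le_weightedTotalDegree w (MvPolynomial.mem_support_iff.mpr h)) hm

lemma hc_mul_top (w : Fin 3 → ℕ) (p q : R3) :
    weightedHomogeneousComponent w (weightedTotalDegree w p + weightedTotalDegree w q) (p * q)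
      = weightedHomogeneousComponent w (weightedTotalDegree w p) p *
        weightedHomogeneousComponent w (weightedTotalDegree w q) q := by
  classical
  set F := weightedTotalDegree w p
  set M := weightedTotalDegree w q
  set A := weightedHomogeneousComponent w F p with hA
  set B := weightedHomogeneousComponent w M q with hB
  have key : p * q = A * B + (A * (q - B) + ((p - A) * B + (p - A) * (q - B))) := by ring
  rw [key, map_add, map_add, map_add]
  have hAB : weightedHomogeneousComponent w (F + M) (A * B) = A * B := by
    apply weightedHomogeneousComponent_eq_self
    exact IsWeightedHomogeneous.mul (weightedHomogeneousComponent_isWeightedHomogeneous F p)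
      (weightedHomogeneousComponent_isWeightedHomogeneous M q)
  have hwA : ∀ m, coeff m A ≠ 0 → Finsupp.weight w m ≤ F := by
    intro m hm
    exact le_of_eq (weightedHomogeneousComponent_isWeightedHomogeneous F p hm)
  have hwB : ∀ m, coeff m B ≠ 0 → Finsupp.weight w m ≤ M := by
    intro m hm
    exact le_of_eq (weightedHomogeneousComponent_isWeightedHomogeneous M q hm)
  have h1 : weightedHomogeneousComponent w (F + M) (A * (q - B)) = 0 :=
    hc_mul_zero_of_lt w _ _ F M (F + M) hwA (fun m hm => coeff_sub_hc w q m hm) le_rfl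
  have h2 : weightedHomogeneousComponent w (F + M) ((p - A) * B) = 0 := by
    rw [show (p - A) * B = B * (p - A) by ring]
    refine hc_mul_zero_of_lt w _ _ M F (F + M) hwB (fun m hm => coeff_sub_hc w p m hm) ?_
    omega
  have h3 : weightedHomogeneousComponent w (F + M) ((p - A) * (q - B)) = 0 :=
    hc_mul_zero_of_lt w _ _ F M (F + M)
      (fun m hm => le_of_lt (coeff_sub_hc w p m hm)) (fun m hm => coeff_sub_hc w q m hm) le_rfl
  rw [hAB, h1, h2, h3]
  ring

lemma finsupp3_eq_zero (m : Fin 3 →₀ ℕ) (h0 : m 0 = 0) (h1 : m 1 = 0) (h2 : m 2 = 0) :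
    m = 0 := by
  ext i
  fin_cases i <;> simp_all

lemma eq_C_of_wTD_zero (q : R3) (h : weightedTotalDegree wA q = 0) :
    q = C (coeff 0 q) := by
  classical
  ext m
  by_cases hm : m = 0
  · subst hm; rw [coeff_zero_C]
  · rw [coeff_C, if_neg (fun hcon => hm hcon.symm)]
    by_contra hc
    have hle := le_weightedTotalDegree wA (MvPolynomial.mem_support_iff.mpr hc)
    rw [h, Nat.le_zero, wA_eval] at hle
    exact hm (finsupp3_eq_zero m (by omega) (by omega) (by omega))

/-! ### Algebra homs and operators -/

noncomputable def ev1 : R3 →ₐ[ℂ] R3 := aeval ![1, X 1, X 2]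
noncomputable def phiM : R3 →ₐ[ℂ] R3 := aeval ![X 0, X 1 + X 2, X 2 - X 1]
noncomputable def psiM : R3 →ₐ[ℂ] R3 :=
  aeval ![X 0, C (2⁻¹ : ℂ) * (X 1 - X 2), C (2⁻¹ : ℂ) * (X 1 + X 2)]

@[simp] lemma ev1_X0 : ev1 (X 0) = 1 := by simp [ev1]
@[simp] lemma ev1_X1 : ev1 (X 1) = X 1 := by simp [ev1]
@[simp] lemma ev1_X2 : ev1 (X 2) = X 2 := by simp [ev1]
@[simp] lemma phiM_X0 : phiM (X 0) = X 0 := by simp [phiM]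
@[simp] lemma phiM_X1 : phiM (X 1) = X 1 + X 2 := by simp [phiM]
@[simp] lemma phiM_X2 : phiM (X 2) = X 2 - X 1 := by simp [phiM]
@[simp] lemma psiM_X0 : psiM (X 0) = X 0 := by simp [psiM]
@[simp] lemma psiM_X1 : psiM (X 1) = C (2⁻¹ : ℂ) * (X 1 - X 2) := by simp [psiM]
@[simp] lemma psiM_X2 : psiM (X 2) = C (2⁻¹ : ℂ) * (X 1 + X 2) := by simp [psiM]

lemma C_half_add : (C (2⁻¹ : ℂ) : R3) + C (2⁻¹ : ℂ) = 1 := by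
  rw [← C_add]
  norm_num

lemma algHom_C' (th : R3 →ₐ[ℂ] R3) (c : ℂ) : th (C c) = C c := by
  rw [← MvPolynomial.algebraMap_eq]; exact th.commutes c

lemma phiM_psiM (x : R3) : phiM (psiM x) = x := by
  have h : phiM.comp psiM = AlgHom.id ℂ R3 := by
    apply MvPolynomial.algHom_ext
    intro i
    fin_cases i
    · show phiM (psiM (X 0)) = X 0
      rw [psiM_X0, phiM_X0]
    · show phiM (psiM (X 1)) = X 1
      rw [psiM_X1, map_mul, map_sub, phiM_X1, phiM_X2, algHom_C']
      linear_combination (X 1 : R3) * C_half_add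
    · show phiM (psiM (X 2)) = X 2
      rw [psiM_X2, map_mul, map_add, phiM_X1, phiM_X2, algHom_C']
      linear_combination (X 2 : R3) * C_half_add
  calc phiM (psiM x) = (phiM.comp psiM) x := rfl
  _ = x := by rw [h]; rfl

lemma psiM_phiM (x : R3) : psiM (phiM x) = x := by
  have h : psiM.comp phiM = AlgHom.id ℂ R3 := by
    apply MvPolynomial.algHom_ext
    intro i
    fin_cases i
    · show psiM (phiM (X 0)) = X 0
      rw [phiM_X0, psiM_X0]
    · show psiM (phiM (X 1)) = X 1
      rw [phiM_X1, map_add, psiM_X1, psiM_X2]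
      linear_combination (X 1 : R3) * C_half_add
    · show psiM (phiM (X 2)) = X 2
      rw [phiM_X2, map_sub, psiM_X1, psiM_X2]
      linear_combination (X 2 : R3) * C_half_add
  calc psiM (phiM x) = (psiM.comp phiM) x := rfl
  _ = x := by rw [h]; rfl

lemma psiM_inj : Function.Injective psiM :=
  Function.LeftInverse.injective phiM_psiM

/-- operators -/
noncomputable def Nop (h : R3) : R3 := X 2 * pderiv 1 h + X 0 * X 1 * pderiv 2 h
noncomputable def N1 (h : R3) : R3 := X 2 * pderiv 1 h + X 1 * pderiv 2 h
noncomputable def Dlt (h : R3) : R3 := X 1 * pderiv 1 h - X 2 * pderiv 2 h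
noncomputable def Gam (h : R3) : R3 :=
  C (2⁻¹ : ℂ) * ((X 1 + X 2) * (pderiv 1 h + pderiv 2 h))
noncomputable def V22 (h : R3) : R3 := X 2 * pderiv 2 h

lemma DAiry_def' (h : R3) : DAiry h = pderiv 0 h + Nop h := by
  rw [DAiry, Nop, add_assoc]

lemma intertwine (θ : R3 →ₐ[ℂ] R3) (V W : R3 → R3)
    (hVadd : ∀ a b, V (a + b) = V a + V b)
    (hWadd : ∀ a b, W (a + b) = W a + W b)
    (hVmul : ∀ a b, V (a * b) = V a * b + a * V b)
    (hWmul : ∀ a b, W (a * b) = W a * b + a * W b)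
    (hVC : ∀ c : ℂ, V (C c) = 0) (hWC : ∀ c : ℂ, W (C c) = 0)
    (hX : ∀ i, θ (V (X i)) = W (θ (X i))) :
    ∀ x, θ (V x) = W (θ x) := by
  intro x
  induction x using MvPolynomial.induction_on with
  | C c =>
    have hθ : θ (C c) = C c := by
      rw [← MvPolynomial.algebraMap_eq]; exact θ.commutes c
    rw [hVC, map_zero, hθ, hWC]
  | add p q hp hq => rw [hVadd, map_add, hp, hq, map_add, hWadd]
  | mul_X p i hp =>
    rw [hVmul, map_add, map_mul, map_mul, hp, hX, map_mul, hWmul]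

lemma Nop_add (a b : R3) : Nop (a + b) = Nop a + Nop b := by simp [Nop]; ring
lemma N1_add (a b : R3) : N1 (a + b) = N1 a + N1 b := by simp [N1]; ring
lemma Dlt_add (a b : R3) : Dlt (a + b) = Dlt a + Dlt b := by simp [Dlt]; ring
lemma Gam_add (a b : R3) : Gam (a + b) = Gam a + Gam b := by simp [Gam]; ring
lemma V22_add (a b : R3) : V22 (a + b) = V22 a + V22 b := by simp [V22]; ring

lemma Nop_mul (a b : R3) : Nop (a * b) = Nop a * b + a * Nop b := by
  simp [Nop, pderiv_mul]; ring
lemma N1_mul (a b : R3) : N1 (a * b) = N1 a * b + a * N1 b := by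
  simp [N1, pderiv_mul]; ring
lemma Dlt_mul (a b : R3) : Dlt (a * b) = Dlt a * b + a * Dlt b := by
  simp [Dlt, pderiv_mul]; ring
lemma Gam_mul (a b : R3) : Gam (a * b) = Gam a * b + a * Gam b := by
  simp [Gam, pderiv_mul]; ring
lemma V22_mul (a b : R3) : V22 (a * b) = V22 a * b + a * V22 b := by
  simp [V22, pderiv_mul]; ring

lemma Nop_C (c : ℂ) : Nop (C c) = 0 := by simp [Nop]
lemma N1_C (c : ℂ) : N1 (C c) = 0 := by simp [N1]
lemma Dlt_C (c : ℂ) : Dlt (C c) = 0 := by simp [Dlt]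
lemma Gam_C (c : ℂ) : Gam (C c) = 0 := by simp [Gam]
lemma V22_C (c : ℂ) : V22 (C c) = 0 := by simp [V22]

lemma pd_ne01 : pderiv (1 : Fin 3) (X 0 : R3) = 0 := pderiv_X_of_ne (by decide)
lemma pd_ne02 : pderiv (2 : Fin 3) (X 0 : R3) = 0 := pderiv_X_of_ne (by decide)
lemma pd_ne10 : pderiv (0 : Fin 3) (X 1 : R3) = 0 := pderiv_X_of_ne (by decide)
lemma pd_ne12 : pderiv (2 : Fin 3) (X 1 : R3) = 0 := pderiv_X_of_ne (by decide)
lemma pd_ne20 : pderiv (0 : Fin 3) (X 2 : R3) = 0 := pderiv_X_of_ne (by decide)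
lemma pd_ne21 : pderiv (1 : Fin 3) (X 2 : R3) = 0 := pderiv_X_of_ne (by decide)

lemma ev1_Nop (x : R3) : ev1 (Nop x) = N1 (ev1 x) := by
  refine intertwine ev1 Nop N1 Nop_add N1_add Nop_mul N1_mul Nop_C N1_C ?_ x
  intro i
  fin_cases i
  · show ev1 (Nop (X 0)) = N1 (ev1 (X 0))
    rw [ev1_X0]
    simp [Nop, N1, pd_ne01, pd_ne02]
  · show ev1 (Nop (X 1)) = N1 (ev1 (X 1))
    rw [ev1_X1]
    simp [Nop, N1, pderiv_X_self, pd_ne12]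
  · show ev1 (Nop (X 2)) = N1 (ev1 (X 2))
    rw [ev1_X2]
    simp [Nop, N1, pderiv_X_self, pd_ne21]

lemma psiM_N1 (x : R3) : psiM (N1 x) = Dlt (psiM x) := by
  refine intertwine psiM N1 Dlt N1_add Dlt_add N1_mul Dlt_mul N1_C Dlt_C ?_ x
  intro i
  fin_cases i
  · show psiM (N1 (X 0)) = Dlt (psiM (X 0))
    rw [psiM_X0]
    simp [N1, Dlt, pd_ne01, pd_ne02, pd_ne10, pd_ne20]
  · show psiM (N1 (X 1)) = Dlt (psiM (X 1))
    rw [psiM_X1]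
    simp only [N1, pderiv_X_self, mul_one, pd_ne12, mul_zero, add_zero, psiM_X2]
    simp [Dlt, pderiv_mul, pderiv_X_self, pd_ne12, pd_ne21, pderiv_C]
    ring
  · show psiM (N1 (X 2)) = Dlt (psiM (X 2))
    rw [psiM_X2]
    simp only [N1, pd_ne21, mul_zero, pderiv_X_self, mul_one, zero_add, psiM_X1]
    simp [Dlt, pderiv_mul, pderiv_X_self, pd_ne12, pd_ne21, pderiv_C]
    ring

lemma psiM_V22 (x : R3) : psiM (V22 x) = Gam (psiM x) := by
  refine intertwine psiM V22 Gam V22_add Gam_add V22_mul Gam_mul V22_C Gam_C ?_ x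
  intro i
  fin_cases i
  · show psiM (V22 (X 0)) = Gam (psiM (X 0))
    rw [psiM_X0]
    simp [V22, Gam, pd_ne02, pd_ne10, pd_ne20]
  · show psiM (V22 (X 1)) = Gam (psiM (X 1))
    rw [psiM_X1]
    simp only [V22, pd_ne12, mul_zero, map_zero]
    simp [Gam, pderiv_mul, pderiv_X_self, pd_ne12, pd_ne21, pderiv_C]
  · show psiM (V22 (X 2)) = Gam (psiM (X 2))
    rw [psiM_X2]
    simp only [V22, pderiv_X_self, mul_one]
    simp [Gam, pderiv_mul, pderiv_X_self, pd_ne12, pd_ne21, pderiv_C]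
    linear_combination (-(X 1 + X 2 : R3)) * C_half_add

lemma ev1_pd1 (x : R3) : ev1 (pderiv 1 x) = pderiv 1 (ev1 x) := by
  refine intertwine ev1 (fun h => pderiv 1 h) (fun h => pderiv 1 h) (by simp) (by simp)
    (fun a b => pderiv_mul) (fun a b => pderiv_mul)
    (fun c => pderiv_C) (fun c => pderiv_C) ?_ x
  intro i
  fin_cases i
  · show ev1 (pderiv 1 (X 0)) = pderiv 1 (ev1 (X 0))
    rw [ev1_X0, pd_ne01]; simp
  · show ev1 (pderiv 1 (X 1)) = pderiv 1 (ev1 (X 1))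
    rw [ev1_X1, pderiv_X_self]; simp
  · show ev1 (pderiv 1 (X 2)) = pderiv 1 (ev1 (X 2))
    rw [ev1_X2, pd_ne21]; simp

lemma ev1_pd2 (x : R3) : ev1 (pderiv 2 x) = pderiv 2 (ev1 x) := by
  refine intertwine ev1 (fun h => pderiv 2 h) (fun h => pderiv 2 h) (by simp) (by simp)
    (fun a b => pderiv_mul) (fun a b => pderiv_mul)
    (fun c => pderiv_C) (fun c => pderiv_C) ?_ x
  intro i
  fin_cases i
  · show ev1 (pderiv 2 (X 0)) = pderiv 2 (ev1 (X 0))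
    rw [ev1_X0, pd_ne02]; simp
  · show ev1 (pderiv 2 (X 1)) = pderiv 2 (ev1 (X 1))
    rw [ev1_X1, pd_ne12]; simp
  · show ev1 (pderiv 2 (X 2)) = pderiv 2 (ev1 (X 2))
    rw [ev1_X2, pderiv_X_self]; simp

lemma pd0_ev1 (x : R3) : pderiv 0 (ev1 x) = 0 := by
  have := intertwine ev1 (fun _ => (0 : R3)) (fun h => pderiv 0 h) (by simp) (by simp)
    (fun a b => by ring) (fun a b => pderiv_mul) (fun c => rfl) (fun c => pderiv_C)
    ?_ x
  · rw [map_zero] at this; exact this.symm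
  intro i
  fin_cases i
  · show ev1 0 = pderiv 0 (ev1 (X 0))
    rw [ev1_X0]; simp
  · show ev1 0 = pderiv 0 (ev1 (X 1))
    rw [ev1_X1, pd_ne10]; simp
  · show ev1 0 = pderiv 0 (ev1 (X 2))
    rw [ev1_X2, pd_ne20]; simp

lemma pd0_psiM (x : R3) : pderiv 0 (psiM x) = psiM (pderiv 0 x) := by
  have := intertwine psiM (fun h => pderiv 0 h) (fun h => pderiv 0 h) (by simp) (by simp)
    (fun a b => pderiv_mul) (fun a b => pderiv_mul)
    (fun c => pderiv_C) (fun c => pderiv_C) ?_ x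
  · exact this.symm
  intro i
  fin_cases i
  · show psiM (pderiv 0 (X 0)) = pderiv 0 (psiM (X 0))
    rw [psiM_X0]; simp [pderiv_X_self]
  · show psiM (pderiv 0 (X 1)) = pderiv 0 (psiM (X 1))
    rw [psiM_X1, pd_ne10]
    simp [pderiv_mul, pderiv_C, pd_ne10, pd_ne20]
  · show psiM (pderiv 0 (X 2)) = pderiv 0 (psiM (X 2))
    rw [psiM_X2, pd_ne20]
    simp [pderiv_mul, pderiv_C, pd_ne10, pd_ne20]

/-! ### Coefficient facts about the diagonal operators -/

lemma coeff_Dlt (g : R3) (m : Fin 3 →₀ ℕ) :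
    coeff m (Dlt g) = ((m 1 : ℂ) - m 2) * coeff m g := by
  rw [Dlt, coeff_sub, coeff_X_mul_diag, coeff_X_mul_diag]
  ring

lemma diag_of_Dlt_zero (g : R3) (h : Dlt g = 0) (m : Fin 3 →₀ ℕ)
    (hm : coeff m g ≠ 0) : m 1 = m 2 := by
  have h1 : coeff m (Dlt g) = 0 := by rw [h, coeff_zero]
  rw [coeff_Dlt] at h1
  rcases mul_eq_zero.mp h1 with h2 | h2
  · have : (m 1 : ℂ) = (m 2 : ℂ) := sub_eq_zero.mp h2
    exact_mod_cast this
  · exact absurd h2 hm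

lemma zero0_of_pd0_zero (g : R3) (h : pderiv 0 g = 0) (m : Fin 3 →₀ ℕ)
    (hm : coeff m g ≠ 0) : m 0 = 0 := by
  by_contra h0
  obtain ⟨m', rfl⟩ := exists_decomp m 0 h0
  have h1 : coeff m' (pderiv 0 g) = 0 := by rw [h, coeff_zero]
  rw [coeff_pderiv] at h1
  rcases mul_eq_zero.mp h1 with h2 | h2
  · have := (Nat.cast_add_one_ne_zero (R := ℂ) (m' 0))
    exact this h2
  · exact hm h2

/-! ### Euler identities -/

lemma eulerA (P : R3) (F : ℕ) (hP : IsWeightedHomogeneous wA P F) :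
    C (2 : ℂ) * (X 0 * pderiv 0 P) + C (2 : ℂ) * (X 1 * pderiv 1 P)
      + C (3 : ℂ) * (X 2 * pderiv 2 P) = C (F : ℂ) * P := by
  ext m
  simp only [coeff_add, coeff_C_mul, coeff_X_mul_diag]
  by_cases hm : coeff m P = 0
  · rw [hm]; ring
  · have hw := hP hm
    rw [wA_eval] at hw
    have hcast : ((2 * m 0 + 2 * m 1 + 3 * m 2 : ℕ) : ℂ) = (F : ℂ) := by
      exact_mod_cast hw
    push_cast at hcast
    linear_combination (coeff m P) * hcast

lemma eulerY (Pt : R3) (n : ℕ) (hP : IsWeightedHomogeneous wY Pt n) :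
    X 1 * pderiv 1 Pt + X 2 * pderiv 2 Pt = C (n : ℂ) * Pt := by
  ext m
  simp only [coeff_add, coeff_C_mul, coeff_X_mul_diag]
  by_cases hm : coeff m Pt = 0
  · rw [hm]; ring
  · have hw := hP hm
    rw [wY_eval] at hw
    have hcast : ((m 1 + m 2 : ℕ) : ℂ) = (n : ℂ) := by
      exact_mod_cast hw
    push_cast at hcast
    linear_combination (coeff m Pt) * hcast

/-! ### Homogeneity transport -/

lemma isWH_wY_hcA (x : R3) (n k : ℕ) (hx : IsWeightedHomogeneous wY x n) :
    IsWeightedHomogeneous wY (weightedHomogeneousComponent wA k x) n := by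
  classical
  intro d hd
  rw [coeff_weightedHomogeneousComponent] at hd
  by_cases h : Finsupp.weight wA d = k
  · rw [if_pos h] at hd; exact hx hd
  · rw [if_neg h] at hd; exact absurd rfl hd

lemma isWH_pow (w : Fin 3 → ℕ) (x : R3) (a k : ℕ) (hx : IsWeightedHomogeneous w x a) :
    IsWeightedHomogeneous w (x ^ k) (k * a) := by
  induction k with
  | zero => rw [pow_zero, Nat.zero_mul]; exact isWeightedHomogeneous_one ℂ w
  | succ k ih =>
    rw [pow_succ, Nat.succ_mul]
    exact IsWeightedHomogeneous.mul ih hx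

lemma transportWH (th : R3 →ₐ[ℂ] R3)
    (hX : ∀ i, IsWeightedHomogeneous wY (th (X i)) (wY i))
    (x : R3) (n : ℕ) (hx : IsWeightedHomogeneous wY x n) :
    IsWeightedHomogeneous wY (th x) n := by
  classical
  have hrepr : th x = ∑ m ∈ x.support, th (monomial m (coeff m x)) := by
    conv_lhs => rw [x.as_sum]
    rw [map_sum]
  rw [← mem_weightedHomogeneousSubmodule, hrepr]
  apply Submodule.sum_mem
  intro m hm
  rw [mem_weightedHomogeneousSubmodule]
  have hmn : Finsupp.weight wY m = n := hx (MvPolynomial.mem_support_iff.mp hm)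
  have hmono : th (monomial m (coeff m x)) =
      C (coeff m x) * (th (X 0) ^ m 0 * (th (X 1) ^ m 1 * th (X 2) ^ m 2)) := by
    rw [monomial_eq, Finsupp.prod_fintype _ _ (fun i => pow_zero _), Fin.prod_univ_three]
    rw [map_mul, algHom_C', map_mul, map_mul, map_pow, map_pow, map_pow]
    ring
  rw [hmono]
  have h0 := isWH_pow wY (th (X 0)) (wY 0) (m 0) (hX 0)
  have h1 := isWH_pow wY (th (X 1)) (wY 1) (m 1) (hX 1)
  have h2 := isWH_pow wY (th (X 2)) (wY 2) (m 2) (hX 2)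
  have := IsWeightedHomogeneous.mul (isWeightedHomogeneous_C wY (coeff m x))
    (IsWeightedHomogeneous.mul h0 (IsWeightedHomogeneous.mul h1 h2))
  have hdeg : 0 + (m 0 * wY 0 + (m 1 * wY 1 + m 2 * wY 2)) = n := by
    rw [← hmn, wY_eval]
    simp [wY]
  rwa [hdeg] at this

lemma isWH_wY_ev1 (x : R3) (n : ℕ) (hx : IsWeightedHomogeneous wY x n) :
    IsWeightedHomogeneous wY (ev1 x) n := by
  apply transportWH ev1 _ x n hx
  intro i
  fin_cases i
  · show IsWeightedHomogeneous wY (ev1 (X 0)) (wY 0)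
    rw [ev1_X0, wY0]
    exact isWeightedHomogeneous_one ℂ wY
  · show IsWeightedHomogeneous wY (ev1 (X 1)) (wY 1)
    rw [ev1_X1, wY1]
    exact isWeightedHomogeneous_X ℂ wY 1
  · show IsWeightedHomogeneous wY (ev1 (X 2)) (wY 2)
    rw [ev1_X2, wY2]
    exact isWeightedHomogeneous_X ℂ wY 2

lemma isWH_sub (w : Fin 3 → ℕ) (a b : R3) (d : ℕ) (ha : IsWeightedHomogeneous w a d)
    (hb : IsWeightedHomogeneous w b d) : IsWeightedHomogeneous w (a - b) d := by
  rw [← mem_weightedHomogeneousSubmodule] at *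
  exact Submodule.sub_mem _ ha hb

lemma isWH_add (w : Fin 3 → ℕ) (a b : R3) (d : ℕ) (ha : IsWeightedHomogeneous w a d)
    (hb : IsWeightedHomogeneous w b d) : IsWeightedHomogeneous w (a + b) d := by
  rw [← mem_weightedHomogeneousSubmodule] at *
  exact Submodule.add_mem _ ha hb

lemma isWH_wY_psiM (x : R3) (n : ℕ) (hx : IsWeightedHomogeneous wY x n) :
    IsWeightedHomogeneous wY (psiM x) n := by
  apply transportWH psiM _ x n hx
  intro i
  fin_cases i
  · show IsWeightedHomogeneous wY (psiM (X 0)) (wY 0)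
    rw [psiM_X0, wY0]
    exact isWeightedHomogeneous_X ℂ wY 0
  · show IsWeightedHomogeneous wY (psiM (X 1)) (wY 1)
    rw [psiM_X1, wY1]
    have := IsWeightedHomogeneous.mul (isWeightedHomogeneous_C wY (2⁻¹ : ℂ))
      (isWH_sub wY (X 1) (X 2) 1
        (by simpa using isWeightedHomogeneous_X ℂ wY 1)
        (by simpa using isWeightedHomogeneous_X ℂ wY 2))
    simpa using this
  · show IsWeightedHomogeneous wY (psiM (X 2)) (wY 2)
    rw [psiM_X2, wY2]
    have := IsWeightedHomogeneous.mul (isWeightedHomogeneous_C wY (2⁻¹ : ℂ))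
      (isWH_add wY (X 1) (X 2) 1
        (by simpa using isWeightedHomogeneous_X ℂ wY 1)
        (by simpa using isWeightedHomogeneous_X ℂ wY 2))
    simpa using this

/-! ### monomial images -/

lemma algHom_monomial (th : R3 →ₐ[ℂ] R3) (m : Fin 3 →₀ ℕ) (c : ℂ) :
    th (monomial m c) = C c * (th (X 0) ^ m 0 * (th (X 1) ^ m 1 * th (X 2) ^ m 2)) := by
  rw [monomial_eq, Finsupp.prod_fintype _ _ (fun i => pow_zero _), Fin.prod_univ_three]
  rw [map_mul, algHom_C', map_mul, map_mul, map_pow, map_pow, map_pow]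
  ring

lemma ev1_monomial (m : Fin 3 →₀ ℕ) (c : ℂ) :
    ev1 (monomial m c) =
      monomial (Finsupp.single 1 (m 1) + Finsupp.single 2 (m 2)) c := by
  rw [algHom_monomial, ev1_X0, ev1_X1, ev1_X2, one_pow, X_pow_eq_monomial, X_pow_eq_monomial,
    monomial_mul]
  simp [C_mul_monomial]

lemma single_add_apply1 (a b : ℕ) :
    (Finsupp.single (1 : Fin 3) a + Finsupp.single (2 : Fin 3) b) 1 = a := by
  simp [Finsupp.single_apply]

lemma single_add_apply2 (a b : ℕ) :
    (Finsupp.single (1 : Fin 3) a + Finsupp.single (2 : Fin 3) b) 2 = b := by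
  simp [Finsupp.single_apply]

lemma ev1_ne_zero_of_WH (P : R3) (F : ℕ) (hP : IsWeightedHomogeneous wA P F)
    (h0 : P ≠ 0) : ev1 P ≠ 0 := by
  classical
  obtain ⟨m₀, hm0⟩ := MvPolynomial.ne_zero_iff.mp h0
  intro hcon
  have hkey : coeff (Finsupp.single 1 (m₀ 1) + Finsupp.single 2 (m₀ 2)) (ev1 P)
      = coeff m₀ P := by
    conv_lhs => rw [P.as_sum, map_sum]
    rw [coeff_sum]
    rw [Finset.sum_eq_single m₀]
    · rw [ev1_monomial, coeff_monomial, if_pos rfl]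
    · intro b hb hbne
      rw [ev1_monomial, coeff_monomial, if_neg]
      intro heq
      have hb1 : b 1 = m₀ 1 := by
        have := congrArg (fun f => f (1 : Fin 3)) heq
        simpa [single_add_apply1] using this
      have hb2 : b 2 = m₀ 2 := by
        have := congrArg (fun f => f (2 : Fin 3)) heq
        simpa [single_add_apply2] using this
      have hwb := hP (MvPolynomial.mem_support_iff.mp hb)
      have hwm := hP hm0
      rw [wA_eval] at hwb hwm
      have hb0 : b 0 = m₀ 0 := by omega
      exact hbne (Finsupp.ext fun i => by fin_cases i <;> simp_all)
    · intro hnot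
      exact absurd (MvPolynomial.mem_support_iff.mpr hm0) hnot
  rw [hcon, coeff_zero] at hkey
  exact hm0 hkey.symm

/-! ### Gamma on diagonally supported polynomials -/

lemma coeff_cross_zero (g : R3) (i j : Fin 3) (hij : i ≠ j)
    (hi : i = 1 ∨ i = 2) (hj : j = 1 ∨ j = 2)
    (hdiag : ∀ m, coeff m g ≠ 0 → m 1 = m 2) (m : Fin 3 →₀ ℕ) (hm : m 1 = m 2) :
    coeff m (X i * pderiv j g) = 0 := by
  by_cases h0 : m i = 0
  · exact coeff_X_mul_zero _ _ _ h0
  · obtain ⟨m', rfl⟩ := exists_decomp m i h0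
    rw [add_comm m' (Finsupp.single i 1), coeff_X_mul, coeff_pderiv]
    have hz : coeff (m' + Finsupp.single j 1) g = 0 := by
      by_contra hc
      have := hdiag _ hc
      simp only [Finsupp.add_apply, Finsupp.single_apply] at this hm
      rcases hi with rfl | rfl <;> rcases hj with rfl | rfl <;> simp_all <;> omega
    rw [hz, mul_zero]

lemma coeff_Gam_diag (g : R3) (hdiag : ∀ m, coeff m g ≠ 0 → m 1 = m 2)
    (m : Fin 3 →₀ ℕ) (hm : m 1 = m 2) :
    coeff m (Gam g) = (m 1 : ℂ) * coeff m g := by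
  have hexp : Gam g = C (2⁻¹ : ℂ) * (X 1 * pderiv 1 g + X 1 * pderiv 2 g
      + X 2 * pderiv 1 g + X 2 * pderiv 2 g) := by
    rw [Gam]; ring
  rw [hexp, coeff_C_mul, coeff_add, coeff_add, coeff_add, coeff_X_mul_diag, coeff_X_mul_diag,
    coeff_cross_zero g 1 2 (by decide) (Or.inl rfl) (Or.inr rfl) hdiag m hm,
    coeff_cross_zero g 2 1 (by decide) (Or.inr rfl) (Or.inl rfl) hdiag m hm]
  rw [← hm]
  ring

lemma single_add_apply0 (a b : ℕ) :
    (Finsupp.single (1 : Fin 3) a + Finsupp.single (2 : Fin 3) b) 0 = 0 := by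
  simp [Finsupp.single_apply]

lemma Nop_zero : Nop 0 = 0 := by
  have := Nop_C 0
  rwa [map_zero] at this

lemma keyStep (pn : R3) (n : ℕ) (hn : 1 ≤ n) (hh : IsWeightedHomogeneous wY pn n)
    (c : ℂ) (heq : DAiry pn = C c * pn) : pn = 0 := by
  classical
  by_contra hpn
  have hF2 : 2 ≤ weightedTotalDegree wA pn := by
    obtain ⟨m, hm, hw⟩ := exists_top wA pn hpn
    have hy := hh hm
    rw [wY_eval] at hy
    rw [wA_eval] at hw
    omega
  obtain ⟨t, hFt⟩ : ∃ t, weightedTotalDegree wA pn = t + 2 :=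
    ⟨weightedTotalDegree wA pn - 2, by omega⟩
  set P := weightedHomogeneousComponent wA (t + 2) pn with hPdef
  have hPne : P ≠ 0 := by
    rw [hPdef, ← hFt]; exact hc_top_ne_zero wA pn hpn
  have hPW : IsWeightedHomogeneous wA P (t + 2) :=
    weightedHomogeneousComponent_isWeightedHomogeneous (t + 2) pn
  have hPY : IsWeightedHomogeneous wY P n := isWH_wY_hcA pn n (t + 2) hh
  have hvan : ∀ k, t + 2 < k → weightedHomogeneousComponent wA k pn = 0 := by
    intro k hk
    exact weightedHomogeneousComponent_eq_zero k pn (by rw [hFt]; exact hk)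
  have hcomp : ∀ k, weightedHomogeneousComponent wA k (DAiry pn)
      = C c * weightedHomogeneousComponent wA k pn := by
    intro k
    rw [heq]
    exact weightedHomogeneousComponent_C_mul (w := wA) (φ := pn) k c
  have eq1 : Nop P = 0 := by
    have h := masterA pn (t + 2)
    rw [hcomp, hvan (t + 2 + 1) (by omega), hvan (t + 2 + 3) (by omega), mul_zero,
      map_zero, zero_add] at h
    rw [Nop]
    exact h.symm
  have eq2 : C c * P = Nop (weightedHomogeneousComponent wA (t + 1) pn) := by
    have h := masterA pn (t + 1)
    rw [hcomp, hvan (t + 1 + 3) (by omega), map_zero, zero_add] at h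
    rw [Nop]
    exact h
  have hPt_ne : ev1 P ≠ 0 := ev1_ne_zero_of_WH P (t + 2) hPW hPne
  have hgne : psiM (ev1 P) ≠ 0 := by
    intro hcon
    exact hPt_ne (psiM_inj (by rw [hcon, map_zero]))
  have hDg : Dlt (psiM (ev1 P)) = 0 := by
    have h1 : ev1 (Nop P) = 0 := by rw [eq1, map_zero]
    rw [ev1_Nop] at h1
    have h2 : psiM (N1 (ev1 P)) = 0 := by rw [h1, map_zero]
    rwa [psiM_N1] at h2
  have hdiag := diag_of_Dlt_zero _ hDg
  have hpd0g : pderiv 0 (psiM (ev1 P)) = 0 := by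
    rw [pd0_psiM, pd0_ev1, map_zero]
  have hm0g := zero0_of_pd0_zero _ hpd0g
  have hgY : IsWeightedHomogeneous wY (psiM (ev1 P)) n :=
    isWH_wY_psiM _ n (isWH_wY_ev1 P n hPY)
  have hc0 : c = 0 := by
    have h1 : C c * psiM (ev1 P)
        = Dlt (psiM (ev1 (weightedHomogeneousComponent wA (t + 1) pn))) := by
      have h2 := congrArg ev1 eq2
      rw [map_mul, algHom_C', ev1_Nop] at h2
      have h3 := congrArg psiM h2
      rwa [map_mul, algHom_C', psiM_N1] at h3
    obtain ⟨m, hm⟩ := MvPolynomial.ne_zero_iff.mp hgne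
    have hd := hdiag m hm
    have h4 := congrArg (coeff m) h1
    rw [coeff_C_mul, coeff_Dlt, hd, sub_self, zero_mul] at h4
    rcases mul_eq_zero.mp h4 with h | h
    · exact h
    · exact absurd h hm
  subst hc0
  rw [map_zero, zero_mul] at heq
  have eq3 : ∃ u, pderiv 0 P + Nop u = 0 := by
    rcases Nat.eq_zero_or_pos t with ht | ht
    · subst ht
      refine ⟨0, ?_⟩
      rw [Nop_zero, add_zero]
      have h := masterB pn
      rw [heq, map_zero] at h
      exact h.symm
    · obtain ⟨s, rfl⟩ : ∃ s, t = s + 1 := ⟨t - 1, by omega⟩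
      refine ⟨weightedHomogeneousComponent wA s pn, ?_⟩
      have h := masterA pn s
      rw [heq, map_zero] at h
      rw [Nop]
      linear_combination -h
  obtain ⟨u, hE⟩ := eq3
  have hE1 : ev1 (pderiv 0 P) + N1 (ev1 u) = 0 := by
    have h := congrArg ev1 hE
    rwa [map_add, ev1_Nop, map_zero] at h
  have hEA := eulerA P (t + 2) hPW
  have hAev := congrArg ev1 hEA
  simp only [map_add, map_mul, algHom_C', ev1_X0, ev1_X1, ev1_X2, ev1_pd1, ev1_pd2,
    one_mul] at hAev
  have hEY := eulerY (ev1 P) n (isWH_wY_ev1 P n hPY)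
  have hdiff : (C (3 : ℂ) : R3) - C (2 : ℂ) = 1 := by
    rw [← C_sub]; norm_num
  have hcomb : C (2 : ℂ) * ev1 (pderiv 0 P)
      = C ((t + 2 : ℕ) : ℂ) * ev1 P - C (2 : ℂ) * (C ((n : ℕ) : ℂ) * ev1 P)
        - X 2 * pderiv 2 (ev1 P) := by
    linear_combination hAev - C (2 : ℂ) * hEY - (X 2 * pderiv 2 (ev1 P)) * hdiff
  have hcombg : C (2 : ℂ) * psiM (ev1 (pderiv 0 P))
      = C ((t + 2 : ℕ) : ℂ) * psiM (ev1 P)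
        - C (2 : ℂ) * (C ((n : ℕ) : ℂ) * psiM (ev1 P)) - Gam (psiM (ev1 P)) := by
    have h := congrArg psiM hcomb
    rw [show X 2 * pderiv 2 (ev1 P) = V22 (ev1 P) from rfl] at h
    simp only [map_mul, map_sub, algHom_C', psiM_V22] at h
    exact h
  have hpsiE : psiM (ev1 (pderiv 0 P)) = - Dlt (psiM (ev1 u)) := by
    have h5 : ev1 (pderiv 0 P) = - N1 (ev1 u) := by linear_combination hE1
    rw [h5, map_neg, psiM_N1]
  obtain ⟨ms, hms⟩ := MvPolynomial.ne_zero_iff.mp hgne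
  have hd12 : ms 1 = ms 2 := hdiag ms hms
  have hd0 : ms 0 = 0 := hm0g ms hms
  have hyn : ms 1 + ms 2 = n := by
    have := hgY hms; rwa [wY_eval] at this
  have hcoeff := congrArg (coeff ms) hcombg
  rw [hpsiE, coeff_C_mul, coeff_neg, coeff_Dlt, hd12, sub_self, zero_mul, coeff_sub,
    coeff_sub, coeff_C_mul, coeff_C_mul, coeff_C_mul,
    coeff_Gam_diag _ hdiag ms hd12] at hcoeff
  have hfac : (((t + 2 : ℕ) : ℂ) - 2 * (n : ℂ) - (ms 1 : ℂ)) * coeff ms (psiM (ev1 P))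
      = 0 := by
    linear_combination -hcoeff
  have hFn : ((t + 2 : ℕ) : ℂ) = 2 * (n : ℂ) + (ms 1 : ℂ) := by
    rcases mul_eq_zero.mp hfac with h | h
    · linear_combination h
    · exact absurd h hms
  have hFn' : t + 2 = 2 * n + ms 1 := by exact_mod_cast hFn
  have hk : 2 * ms 1 = n := by omega
  have hgmono : psiM (ev1 P) = monomial ms (coeff ms (psiM (ev1 P))) := by
    ext m
    by_cases hmm : m = ms
    · subst hmm; rw [coeff_monomial, if_pos rfl]
    · rw [coeff_monomial, if_neg (fun hcon => hmm hcon.symm)]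
      by_contra hcm
      have h1 := hdiag m hcm
      have h0' := hm0g m hcm
      have hy' : m 1 + m 2 = n := by
        have := hgY hcm; rwa [wY_eval] at this
      apply hmm
      refine Finsupp.ext fun i => ?_
      fin_cases i
      · show m 0 = ms 0
        omega
      · show m 1 = ms 1
        omega
      · show m 2 = ms 2
        omega
  -- final contradiction via evaluation y1 := 0, z := 1
  have hev1P : ev1 P = phiM (psiM (ev1 P)) := (phiM_psiM (ev1 P)).symm
  have he0X0 : (aeval ![X 0, 0, X 2] : R3 →ₐ[ℂ] R3) (X 0) = X 0 := by simp
  have he0X1 : (aeval ![X 0, 0, X 2] : R3 →ₐ[ℂ] R3) (X 1) = 0 := by simp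
  have he0X2 : (aeval ![X 0, 0, X 2] : R3 →ₐ[ℂ] R3) (X 2) = X 2 := by simp
  set e0 : R3 →ₐ[ℂ] R3 := aeval ![X 0, 0, X 2] with he0def
  have hrhs : e0 (phiM (psiM (ev1 P))) = monomial (Finsupp.single 2 n) (coeff ms (psiM (ev1 P))) := by
    conv_lhs => rw [hgmono]
    rw [algHom_monomial phiM, phiM_X0, phiM_X1, phiM_X2, map_mul, algHom_C', map_mul,
      map_mul, map_pow, map_pow, map_pow, map_add, map_sub, he0X0, he0X1, he0X2, zero_add,
      sub_zero, hd0, pow_zero, one_mul, ← pow_add, hyn, X_pow_eq_monomial, C_mul_monomial,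
      mul_one]
  have hlhs : coeff (Finsupp.single 2 n) (e0 (ev1 P)) = 0 := by
    have hsum : e0 (ev1 P) = ∑ m ∈ P.support, e0 (ev1 (monomial m (coeff m P))) := by
      conv_lhs => rw [P.as_sum]
      rw [map_sum, map_sum]
    rw [hsum, coeff_sum]
    apply Finset.sum_eq_zero
    intro m hm
    rw [ev1_monomial, algHom_monomial e0, he0X0, he0X1, he0X2, single_add_apply0,
      single_add_apply1, single_add_apply2, pow_zero, one_mul]
    by_cases hm1 : m 1 = 0
    · rw [hm1, pow_zero, one_mul, X_pow_eq_monomial, C_mul_monomial, mul_one, coeff_monomial]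
      rw [if_neg]
      intro hcon
      have hm2 : m 2 = n := by
        have := congrArg (fun f => f (2 : Fin 3)) hcon
        simpa [Finsupp.single_apply] using this
      have hwm := hPW (MvPolynomial.mem_support_iff.mp hm)
      rw [wA_eval] at hwm
      omega
    · rw [zero_pow hm1]
      simp
  have hfinal : coeff (Finsupp.single 2 n) (e0 (ev1 P)) = coeff ms (psiM (ev1 P)) := by
    conv_lhs => rw [hev1P]
    rw [hrhs, coeff_monomial, if_pos rfl]
  rw [hlhs] at hfinal
  exact hms hfinal.symm

end AiryAux

open AiryAux in
theorem divides_DAiry_iff_constant (p : MvPolynomial (Fin 3) ℂ)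
    (h : p ∣ DAiry p) : ∃ c : ℂ, p = C c := by
  classical
  by_cases hp : p = 0
  · exact ⟨0, by rw [hp, map_zero]⟩
  obtain ⟨q, hq⟩ := h
  have hqC : ∃ c : ℂ, q = C c := by
    by_cases hq0 : q = 0
    · exact ⟨0, by rw [hq0, map_zero]⟩
    rcases Nat.eq_zero_or_pos (weightedTotalDegree wA q) with hM0 | hMpos
    · exact ⟨coeff 0 q, eq_C_of_wTD_zero q hM0⟩
    · exfalso
      have hM2 : 2 ≤ weightedTotalDegree wA q := by
        obtain ⟨m, hm, hwm⟩ := exists_top wA q hq0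
        rw [wA_eval] at hwm
        omega
      have htop := hc_mul_top wA p q
      obtain ⟨k, hk⟩ : ∃ k, weightedTotalDegree wA p + weightedTotalDegree wA q = k + 1 :=
        ⟨weightedTotalDegree wA p + weightedTotalDegree wA q - 1, by omega⟩
      have hvan : ∀ j, weightedTotalDegree wA p < j →
          weightedHomogeneousComponent wA j p = 0 := fun j hj =>
        weightedHomogeneousComponent_eq_zero j p hj
      have hDcomp := masterA p k
      rw [← hk, hvan (k + 3) (by omega), hvan k (by omega)] at hDcomp
      simp only [map_zero, mul_zero, add_zero, zero_add] at hDcomp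
      rw [hq, htop] at hDcomp
      rcases mul_eq_zero.mp hDcomp with h' | h'
      · exact hc_top_ne_zero wA p hp h'
      · exact hc_top_ne_zero wA q hq0 h'
  obtain ⟨c, rfl⟩ := hqC
  rw [mul_comm] at hq
  have hcompY : ∀ n, DAiry (weightedHomogeneousComponent wY n p)
      = C c * weightedHomogeneousComponent wY n p := by
    intro n
    rw [← masterY, hq, weightedHomogeneousComponent_C_mul]
  have hkill : ∀ n, 1 ≤ n → weightedHomogeneousComponent wY n p = 0 := fun n hn =>
    keyStep _ n hn (weightedHomogeneousComponent_isWeightedHomogeneous n p) c (hcompY n)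
  have hnoy : ∀ m : Fin 3 →₀ ℕ, coeff m p ≠ 0 → m 1 = 0 ∧ m 2 = 0 := by
    intro m hm
    by_contra hcon
    push_neg at hcon
    have hge : 1 ≤ m 1 + m 2 := by
      rcases Nat.eq_zero_or_pos (m 1) with h1 | h1
      · have := hcon h1
        omega
      · omega
    have h0 := hkill (m 1 + m 2) hge
    have hcz := congrArg (coeff m) h0
    rw [coeff_weightedHomogeneousComponent, if_pos (by rw [wY_eval]), coeff_zero] at hcz
    exact hm hcz
  have hpd1 : pderiv 1 p = 0 := by
    ext m
    rw [coeff_pderiv, coeff_zero]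
    have hz : coeff (m + Finsupp.single 1 1) p = 0 := by
      by_contra hc2
      have h1 := (hnoy _ hc2).1
      simp [Finsupp.add_apply, Finsupp.single_apply] at h1
    rw [hz, mul_zero]
  have hpd2 : pderiv 2 p = 0 := by
    ext m
    rw [coeff_pderiv, coeff_zero]
    have hz : coeff (m + Finsupp.single 2 1) p = 0 := by
      by_contra hc2
      have h2 := (hnoy _ hc2).2
      simp [Finsupp.add_apply, Finsupp.single_apply] at h2
    rw [hz, mul_zero]
  have hDp : DAiry p = pderiv 0 p := by
    rw [DAiry, hpd1, hpd2]
    simp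
  rw [hDp] at hq
  obtain ⟨m0, hm0c, hm0w⟩ := exists_top wA p hp
  have hcc : c = 0 := by
    have hco := congrArg (coeff m0) hq
    rw [coeff_pderiv, coeff_C_mul] at hco
    have hz : coeff (m0 + Finsupp.single 0 1) p = 0 := by
      by_contra hc2
      have hle := le_weightedTotalDegree wA (MvPolynomial.mem_support_iff.mpr hc2)
      rw [map_add, weight_single_one, wA0] at hle
      omega
    rw [hz, mul_zero] at hco
    rcases mul_eq_zero.mp hco.symm with h' | h'
    · exact h'
    · exact absurd h' hm0c
  subst hcc
  rw [map_zero, zero_mul] at hq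
  have hno0 := zero0_of_pd0_zero p hq
  refine ⟨coeff 0 p, ?_⟩
  ext m
  by_cases hm : m = 0
  · subst hm; rw [coeff_zero_C]
  · rw [coeff_C, if_neg (fun hcon => hm hcon.symm)]
    by_contra hc2
    obtain ⟨h1, h2⟩ := hnoy m hc2
    exact hm (finsupp3_eq_zero m (hno0 m hc2) h1 h2)
end

section
/- Let D_Airy = ∂/∂z + y₂·∂/∂y₁ + z·y₁·∂/∂y₂ on ℂ[z,y₁,y₂]. If p ∈ ℂ[z,y₁,y₂] and c ∈ ℂ satisfy D_Airy(p) + c·y₁ = 0, then c = 0 and p is constant. -/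
open MvPolynomial

lemma coeff_pderiv' {σ : Type*} [DecidableEq σ] (i : σ) (m : σ →₀ ℕ) (p : MvPolynomial σ ℂ) :
    coeff m (pderiv i p) = (m i + 1 : ℕ) * coeff (m + Finsupp.single i 1) p := by
  induction p using MvPolynomial.induction_on' with
  | monomial s a =>
    rw [pderiv_monomial, coeff_monomial, coeff_monomial]
    by_cases hs : s i = 0
    · have h1 : s - Finsupp.single i 1 = s := by
        ext x; rw [Finsupp.tsub_apply, Finsupp.single_apply]
        by_cases hx : i = x
        · subst hx; simp [hs]
        · simp [hx]
      rw [h1]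
      have h2 : ¬ s = m + Finsupp.single i 1 := by
        intro he
        have := congrArg (fun f => f i) he
        simp [Finsupp.single_apply, hs] at this
      rw [if_neg h2]
      split_ifs with h3
      · subst h3; simp [hs]
      · ring
    · by_cases he : s = m + Finsupp.single i 1
      · subst he
        have h1 : m + Finsupp.single i 1 - Finsupp.single i 1 = m := by
          ext x; simp [Finsupp.tsub_apply, Finsupp.add_apply]
        rw [if_pos h1, if_pos rfl]
        simp [Finsupp.add_apply, Finsupp.single_apply]
        ring
      · have h1 : ¬ s - Finsupp.single i 1 = m := by
          intro hc
          apply he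
          rw [← hc]
          ext x; rw [Finsupp.add_apply, Finsupp.tsub_apply, Finsupp.single_apply]
          by_cases hx : i = x
          · subst hx; simp; omega
          · simp [hx]
        rw [if_neg h1, if_neg he]; simp
  | add p q hp hq =>
    rw [map_add, coeff_add, coeff_add, hp, hq]; ring

noncomputable def mk3 (k i j : ℕ) : Fin 3 →₀ ℕ :=
  Finsupp.single 0 k + Finsupp.single 1 i + Finsupp.single 2 j

lemma mk3_apply0 (k i j : ℕ) : mk3 k i j 0 = k := by
  simp [mk3, Finsupp.single_apply]
lemma mk3_apply1 (k i j : ℕ) : mk3 k i j 1 = i := by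
  simp [mk3, Finsupp.single_apply]
lemma mk3_apply2 (k i j : ℕ) : mk3 k i j 2 = j := by
  simp [mk3, Finsupp.single_apply]

lemma eq_mk3 (m : Fin 3 →₀ ℕ) : m = mk3 (m 0) (m 1) (m 2) := by
  ext x
  fin_cases x <;> simp [mk3, Finsupp.single_apply]

noncomputable def Fc (p : MvPolynomial (Fin 3) ℂ) (k i j : ℕ) : ℂ := coeff (mk3 k i j) p

lemma masterN (p : MvPolynomial (Fin 3) ℂ) (c : ℂ) (h : DAiry p + C c * X 1 = 0)
    (k i j : ℕ) :
    (k+1 : ℂ) * Fc p (k+1) i j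
    + (i+1 : ℂ) * (if j = 0 then 0 else Fc p k (i+1) (j-1))
    + (j+1 : ℂ) * (if k = 0 ∨ i = 0 then 0 else Fc p (k-1) (i-1) (j+1))
    + (if k = 0 ∧ i = 1 ∧ j = 0 then c else 0) = 0 := by
  classical
  have h0 := congrArg (coeff (mk3 k i j)) h
  rw [coeff_add, coeff_zero] at h0
  rw [DAiry, coeff_add, coeff_add] at h0
  -- term 1
  have t1 : coeff (mk3 k i j) (pderiv 0 p) = (k+1 : ℂ) * Fc p (k+1) i j := by
    rw [coeff_pderiv']
    have e1 : mk3 k i j + Finsupp.single 0 1 = mk3 (k+1) i j := by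
      ext x; fin_cases x <;> simp [mk3, Finsupp.single_apply]
    rw [e1, mk3_apply0]
    push_cast; rfl
  -- term 2
  have t2 : coeff (mk3 k i j) (X 2 * pderiv 1 p)
      = (i+1 : ℂ) * (if j = 0 then 0 else Fc p k (i+1) (j-1)) := by
    rw [coeff_X_mul']
    by_cases hj : j = 0
    · rw [if_neg, if_pos hj, mul_zero]
      simp [Finsupp.mem_support_iff, mk3_apply2, hj]
    · rw [if_pos, if_neg hj]
      · have e2 : mk3 k i j - Finsupp.single 2 1 = mk3 k i (j-1) := by
          ext x; fin_cases x <;>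
            simp [mk3, Finsupp.single_apply, Finsupp.tsub_apply]
        rw [e2, coeff_pderiv']
        have e3 : mk3 k i (j-1) + Finsupp.single 1 1 = mk3 k (i+1) (j-1) := by
          ext x; fin_cases x <;> simp [mk3, Finsupp.single_apply]
        rw [e3, mk3_apply1]
        push_cast; rfl
      · simp [Finsupp.mem_support_iff, mk3_apply2, hj]
  -- term 3
  have t3 : coeff (mk3 k i j) (X 0 * X 1 * pderiv 2 p)
      = (j+1 : ℂ) * (if k = 0 ∨ i = 0 then 0 else Fc p (k-1) (i-1) (j+1)) := by
    rw [mul_assoc, coeff_X_mul']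
    by_cases hk : k = 0
    · rw [if_neg, if_pos (Or.inl hk), mul_zero]
      simp [Finsupp.mem_support_iff, mk3_apply0, hk]
    · rw [if_pos]
      · have e4 : mk3 k i j - Finsupp.single 0 1 = mk3 (k-1) i j := by
          ext x; fin_cases x <;>
            simp [mk3, Finsupp.single_apply, Finsupp.tsub_apply]
        rw [e4, coeff_X_mul']
        by_cases hi : i = 0
        · rw [if_neg, if_pos (Or.inr hi), mul_zero]
          simp [Finsupp.mem_support_iff, mk3_apply1, hi]
        · rw [if_pos, if_neg (by tauto)]
          · have e5 : mk3 (k-1) i j - Finsupp.single 1 1 = mk3 (k-1) (i-1) j := by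
              ext x; fin_cases x <;>
                simp [mk3, Finsupp.single_apply, Finsupp.tsub_apply]
            rw [e5, coeff_pderiv']
            have e6 : mk3 (k-1) (i-1) j + Finsupp.single 2 1 = mk3 (k-1) (i-1) (j+1) := by
              ext x; fin_cases x <;> simp [mk3, Finsupp.single_apply]
            rw [e6, mk3_apply2]
            push_cast; rfl
          · simp [Finsupp.mem_support_iff, mk3_apply1, hi]
      · simp [Finsupp.mem_support_iff, mk3_apply0, hk]
  -- term 4
  have t4 : coeff (mk3 k i j) (C c * X 1)
      = (if k = 0 ∧ i = 1 ∧ j = 0 then c else 0) := by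
    rw [coeff_C_mul, coeff_X']
    by_cases hkij : k = 0 ∧ i = 1 ∧ j = 0
    · obtain ⟨rfl, rfl, rfl⟩ := hkij
      rw [if_pos, if_pos ⟨rfl, rfl, rfl⟩, mul_one]
      ext x; fin_cases x <;> simp [mk3, Finsupp.single_apply]
    · rw [if_neg, if_neg hkij, mul_zero]
      intro he
      apply hkij
      refine ⟨?_, ?_, ?_⟩
      · have := congrArg (fun f => f 0) he
        simpa [mk3_apply0, Finsupp.single_apply] using this.symm
      · have := congrArg (fun f => f 1) he
        simpa [mk3_apply1, Finsupp.single_apply] using this.symm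
      · have := congrArg (fun f => f 2) he
        simpa [mk3_apply2, Finsupp.single_apply] using this.symm
  rw [t1, t2, t3, t4] at h0
  exact h0


lemma sliceLemma (G : ℤ → ℤ → ℂ) (d : ℤ) (hd : 1 ≤ d) (c : ℂ)
    (hneg : ∀ k j : ℤ, k < 0 ∨ j < 0 ∨ d < j → G k j = 0)
    (hfin : ∃ N : ℤ, ∀ k j : ℤ, N ≤ k → G k j = 0)
    (hrel : ∀ k j : ℤ, ((k+1 : ℤ) : ℂ) * G (k+1) j + ((d-j+1 : ℤ) : ℂ) * G k (j-1)
      + ((j+1 : ℤ) : ℂ) * G (k-1) (j+1)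
      + (if k = 0 ∧ j = 0 ∧ d = 1 then c else 0) = 0) :
    (∀ k j : ℤ, G k j = 0) ∧ (d = 1 → c = 0) := by
  by_cases htop : ∀ k : ℤ, G k d = 0
  · -- Case A : top layer vanishes, hence everything vanishes
    have A : ∀ r : ℕ, (r : ℤ) ≤ d → ∀ k : ℤ, G k (d - r) = 0 := by
      intro r
      induction r using Nat.strong_induction_on with
      | _ r IH =>
        match r with
        | 0 => intro _ k; simpa using htop k
        | (s+1) =>
          intro hr k
          push_cast at hr
          have hprev : ∀ k' : ℤ, G k' (d - s) = 0 := IH s (by omega) (by omega)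
          have hprev2 : ∀ k' : ℤ, G k' (d - s + 1) = 0 := by
            match s with
            | 0 => intro k'; exact hneg _ _ (by omega)
            | (t+1) =>
              intro k'
              have := IH t (by omega) (by push_cast; omega) k'
              rw [show d - (t:ℤ) = d - ((t:ℤ)+1) + 1 by ring] at this
              exact_mod_cast this
          have hr1 := hrel k (d - s)
          rw [if_neg (by omega)] at hr1
          rw [hprev (k+1), hprev2 (k-1)] at hr1
          push_cast at hr1
          have h2 : ((s:ℂ) + 1) * G k (d - s - 1) = 0 := by
            linear_combination hr1
          have h3 : ((s:ℂ) + 1) ≠ 0 := Nat.cast_add_one_ne_zero (R := ℂ) s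
          have h4 := (mul_eq_zero.mp h2).resolve_left h3
          rw [show d - (((s:ℕ)+1:ℕ) : ℤ) = d - (s:ℤ) - 1 by push_cast; ring]
          exact h4
    have hall : ∀ k j : ℤ, G k j = 0 := by
      intro k j
      by_cases hj : 0 ≤ j ∧ j ≤ d
      · have hr : ((d - j).toNat : ℤ) = d - j := Int.toNat_of_nonneg (by omega)
        have := A (d-j).toNat (by omega) k
        rw [hr, show d - (d - j) = j by ring] at this
        exact this
      · exact hneg k j (by omega)
    refine ⟨hall, fun hd1 => ?_⟩
    have hr0 := hrel 0 0
    rw [if_pos ⟨rfl, rfl, hd1⟩] at hr0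
    rw [hall (0+1) 0, hall 0 (0-1), hall (0-1) (0+1)] at hr0
    simpa using hr0
  · -- Case B : top layer has a maximal nonzero entry; derive a contradiction
    exfalso
    push_neg at htop
    obtain ⟨N, hN⟩ := hfin
    obtain ⟨n, hn, hmax⟩ : ∃ n : ℤ, G n d ≠ 0 ∧ ∀ m : ℤ, n < m → G m d = 0 := by
      obtain ⟨m0, hm0⟩ := htop
      obtain ⟨n, hn, hmax'⟩ := Int.exists_greatest_of_bdd (P := fun z => G z d ≠ 0)
        ⟨N, fun z hz => by
          by_contra hc
          push_neg at hc
          exact hz (hN z d (by omega))⟩ ⟨m0, hm0⟩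
      exact ⟨n, hn, fun m hm => by
        by_contra hc
        exact absurd (hmax' m hc) (by omega)⟩
    have hn0 : (0:ℤ) ≤ n := by
      by_contra hc
      exact hn (hneg n d (by omega))
    have key : ∀ a : ℕ,
        ((2*(a:ℤ) ≤ d →
          (∀ m : ℤ, n + (a:ℤ) < m → G m (d - 2*(a:ℤ)) = 0) ∧
          ∃ q : ℚ, 0 < q ∧ G (n + (a:ℤ)) (d - 2*(a:ℤ)) = (-1)^a * (q:ℂ) * G n d)
        ∧ (2*(a:ℤ) + 1 ≤ d →
          (∀ m : ℤ, n + (a:ℤ) < m → G m (d - 2*(a:ℤ) - 1) = 0) ∧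
          G (n + (a:ℤ)) (d - 2*(a:ℤ) - 1) = 0 ∧
          ∃ q : ℚ, 0 ≤ q ∧ G (n + (a:ℤ) - 1) (d - 2*(a:ℤ) - 1) = (-1)^(a+1) * (q:ℂ) * G n d)) := by
      intro a
      induction a with
      | zero =>
        constructor
        · intro _
          constructor
          · intro m hm
            rw [show d - 2*((0:ℕ):ℤ) = d by push_cast; ring]
            exact hmax m (by push_cast at hm; omega)
          · refine ⟨1, one_pos, ?_⟩
            rw [show d - 2*((0:ℕ):ℤ) = d by push_cast; ring,
              show n + ((0:ℕ):ℤ) = n by push_cast; ring]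
            push_cast
            ring
        · intro _
          have lvl : d - 2*((0:ℕ):ℤ) - 1 = d - 1 := by push_cast; ring
          refine ⟨?_, ?_, ?_⟩
          · intro m hm
            push_cast at hm
            rw [lvl]
            have hr := hrel m d
            rw [if_neg (by omega), hmax (m+1) (by omega),
              hneg (m-1) (d+1) (by omega)] at hr
            push_cast at hr
            linear_combination hr
          · rw [lvl, show n + ((0:ℕ):ℤ) = n by push_cast; ring]
            have hr := hrel n d
            rw [if_neg (by omega), hmax (n+1) (by omega),
              hneg (n-1) (d+1) (by omega)] at hr
            push_cast at hr
            linear_combination hr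
          · rw [lvl, show n + ((0:ℕ):ℤ) - 1 = n - 1 by push_cast; ring]
            by_cases hn1 : n = 0
            · refine ⟨0, le_refl _, ?_⟩
              rw [hneg (n-1) (d-1) (by omega)]
              push_cast
              ring
            · have hr := hrel (n-1) d
              rw [if_neg (by omega), show n - 1 - 1 = n - 2 by ring,
                show n - 1 + 1 = n by ring, hneg (n-2) (d+1) (by omega)] at hr
              push_cast at hr
              refine ⟨(n:ℚ), by exact_mod_cast hn0, ?_⟩
              push_cast
              linear_combination hr
      | succ a IH =>
        obtain ⟨IHP, IHQ⟩ := IH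
        have castA : (((a:ℕ)+1:ℕ) : ℤ) = (a:ℤ) + 1 := by push_cast; ring
        have hCne : (2*(a:ℂ)+2) ≠ 0 := by
          have h0 : ((2*a+2 : ℕ) : ℂ) ≠ 0 := Nat.cast_ne_zero.mpr (by omega)
          push_cast at h0
          exact h0
        have hP1 : (2*(((a:ℕ)+1:ℕ):ℤ) ≤ d →
            (∀ m : ℤ, n + (((a:ℕ)+1:ℕ):ℤ) < m → G m (d - 2*(((a:ℕ)+1:ℕ):ℤ)) = 0) ∧
            ∃ q : ℚ, 0 < q ∧ G (n + (((a:ℕ)+1:ℕ):ℤ)) (d - 2*(((a:ℕ)+1:ℕ):ℤ))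
              = (-1)^((a:ℕ)+1) * (q:ℂ) * G n d) := by
          intro hle
          rw [castA] at hle
          obtain ⟨PA, q, hq, hu⟩ := IHP (by omega)
          obtain ⟨QA, QB, -⟩ := IHQ (by omega)
          have lvl : d - 2*(((a:ℕ)+1:ℕ):ℤ) = d - 2*(a:ℤ) - 2 := by rw [castA]; ring
          have row : n + (((a:ℕ)+1:ℕ):ℤ) = n + (a:ℤ) + 1 := by rw [castA]; ring
          constructor
          · intro m hm
            rw [castA] at hm
            rw [lvl]
            have hr := hrel m (d - 2*(a:ℤ) - 1)
            rw [if_neg (by omega),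
              show d - 2*(a:ℤ) - 1 - 1 = d - 2*(a:ℤ) - 2 by ring,
              show d - 2*(a:ℤ) - 1 + 1 = d - 2*(a:ℤ) by ring,
              QA (m+1) (by omega), PA (m-1) (by omega)] at hr
            push_cast at hr
            have h2 : ((2*(a:ℂ)+2)) * G m (d - 2*(a:ℤ) - 2) = 0 := by
              linear_combination hr
            exact (mul_eq_zero.mp h2).resolve_left hCne
          · refine ⟨((d:ℚ) - 2*a) * q / (2*(a:ℚ)+2), ?_, ?_⟩
            · apply div_pos
              · apply mul_pos _ hq
                have h5 : (0:ℤ) < d - 2*(a:ℤ) := by omega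
                have h6 : ((d - 2*(a:ℤ) : ℤ) : ℚ) > 0 := by exact_mod_cast h5
                push_cast at h6
                linarith
              · positivity
            · rw [lvl, row]
              have hr := hrel (n + (a:ℤ) + 1) (d - 2*(a:ℤ) - 1)
              rw [if_neg (by omega),
                show n + (a:ℤ) + 1 + 1 = n + (a:ℤ) + 2 by ring,
                show n + (a:ℤ) + 1 - 1 = n + (a:ℤ) by ring,
                show d - 2*(a:ℤ) - 1 - 1 = d - 2*(a:ℤ) - 2 by ring,
                show d - 2*(a:ℤ) - 1 + 1 = d - 2*(a:ℤ) by ring,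
                QA (n + (a:ℤ) + 2) (by omega), hu] at hr
              push_cast at hr
              apply mul_left_cancel₀ hCne
              have hqq : (2*(a:ℚ)+2) * (((d:ℚ) - 2*a) * q / (2*(a:ℚ)+2))
                  = ((d:ℚ) - 2*a) * q := by field_simp
              have hqqC := congrArg (fun x : ℚ => (x : ℂ)) hqq
              push_cast at hqqC
              push_cast
              linear_combination hr + (-1:ℂ)^a * G n d * hqqC
        refine ⟨hP1, ?_⟩
        -- Q (a+1) : odd level r = 2a+3
        intro hle
        rw [castA] at hle
        obtain ⟨PA1, qP, hqP, huP⟩ := hP1 (by rw [castA]; omega)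
        obtain ⟨QA, QB, qQ, hqQ, hvQ⟩ := IHQ (by omega)
        have lvl : d - 2*(((a:ℕ)+1:ℕ):ℤ) - 1 = d - 2*(a:ℤ) - 3 := by rw [castA]; ring
        have lvl2 : d - 2*(((a:ℕ)+1:ℕ):ℤ) = d - 2*(a:ℤ) - 2 := by rw [castA]; ring
        have row : n + (((a:ℕ)+1:ℕ):ℤ) = n + (a:ℤ) + 1 := by rw [castA]; ring
        rw [lvl2, row] at PA1
        rw [lvl2, row] at huP
        have hDne : (2*(a:ℂ)+3) ≠ 0 := by
          have h0 : ((2*a+3 : ℕ) : ℂ) ≠ 0 := Nat.cast_ne_zero.mpr (by omega)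
          push_cast at h0
          exact h0
        refine ⟨?_, ?_, ?_⟩
        · intro m hm
          rw [castA] at hm
          rw [lvl]
          have hr := hrel m (d - 2*(a:ℤ) - 2)
          rw [if_neg (by omega),
            show d - 2*(a:ℤ) - 2 - 1 = d - 2*(a:ℤ) - 3 by ring,
            show d - 2*(a:ℤ) - 2 + 1 = d - 2*(a:ℤ) - 1 by ring,
            PA1 (m+1) (by omega), QA (m-1) (by omega)] at hr
          push_cast at hr
          have h2 : ((2*(a:ℂ)+3)) * G m (d - 2*(a:ℤ) - 3) = 0 := by
            linear_combination hr
          exact (mul_eq_zero.mp h2).resolve_left hDne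
        · rw [lvl, row]
          have hr := hrel (n + (a:ℤ) + 1) (d - 2*(a:ℤ) - 2)
          rw [if_neg (by omega),
            show n + (a:ℤ) + 1 + 1 = n + (a:ℤ) + 2 by ring,
            show n + (a:ℤ) + 1 - 1 = n + (a:ℤ) by ring,
            show d - 2*(a:ℤ) - 2 - 1 = d - 2*(a:ℤ) - 3 by ring,
            show d - 2*(a:ℤ) - 2 + 1 = d - 2*(a:ℤ) - 1 by ring,
            PA1 (n + (a:ℤ) + 2) (by omega), QB] at hr
          push_cast at hr
          have h2 : ((2*(a:ℂ)+3)) * G (n + (a:ℤ) + 1) (d - 2*(a:ℤ) - 3) = 0 := by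
            linear_combination hr
          exact (mul_eq_zero.mp h2).resolve_left hDne
        · rw [lvl, row, show n + (a:ℤ) + 1 - 1 = n + (a:ℤ) by ring]
          have hr := hrel (n + (a:ℤ)) (d - 2*(a:ℤ) - 2)
          rw [if_neg (by omega),
            show d - 2*(a:ℤ) - 2 - 1 = d - 2*(a:ℤ) - 3 by ring,
            show d - 2*(a:ℤ) - 2 + 1 = d - 2*(a:ℤ) - 1 by ring,
            huP, hvQ] at hr
          push_cast at hr
          refine ⟨(((n:ℚ) + a + 1) * qP + ((d:ℚ) - 2*a - 1) * qQ) / (2*(a:ℚ)+3), ?_, ?_⟩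
          · apply div_nonneg _ (by positivity)
            have h7 : (0:ℚ) ≤ (n:ℚ) + a + 1 := by
              have : ((n:ℤ):ℚ) ≥ 0 := by exact_mod_cast hn0
              push_cast at this
              positivity
            have h8 : (0:ℚ) ≤ (d:ℚ) - 2*a - 1 := by
              have h5 : (0:ℤ) ≤ d - 2*(a:ℤ) - 1 := by omega
              have h6 : ((d - 2*(a:ℤ) - 1 : ℤ) : ℚ) ≥ 0 := by exact_mod_cast h5
              push_cast at h6
              linarith
            have := mul_nonneg h7 hqP.le
            have := mul_nonneg h8 hqQ
            linarith
          · apply mul_left_cancel₀ hDne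
            have hqq : (2*(a:ℚ)+3) * ((((n:ℚ) + a + 1) * qP + ((d:ℚ) - 2*a - 1) * qQ) / (2*(a:ℚ)+3))
                = ((n:ℚ) + a + 1) * qP + ((d:ℚ) - 2*a - 1) * qQ := by field_simp
            have hqqC := congrArg (fun x : ℚ => (x : ℂ)) hqq
            push_cast at hqqC
            push_cast
            linear_combination hr + (-1:ℂ)^(a+1) * G n d * hqqC
    -- final contradiction
    rcases Int.even_or_odd d with ⟨e, he⟩ | ⟨e, he⟩
    · -- d = e + e, even, e ≥ 1
      have he1 : (1:ℤ) ≤ e := by omega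
      set K : ℕ := e.toNat with hK
      have hKe : (K:ℤ) = e := Int.toNat_of_nonneg (by omega)
      have hK1 : 1 ≤ K := by omega
      obtain ⟨PA, q, hq, hu⟩ := (key K).1 (by omega)
      obtain ⟨-, -, qQ, hqQ, hv⟩ := (key (K-1)).2 (by
        push_cast [Nat.cast_sub hK1]; omega)
      have hKm : ((K-1 : ℕ) : ℤ) = (K:ℤ) - 1 := by push_cast [Nat.cast_sub hK1]; ring
      rw [hKm] at hv
      rw [show d - 2*((K:ℤ)-1) - 1 = 1 by omega] at hv
      rw [show n + ((K:ℤ)-1) - 1 = n + (K:ℤ) - 2 by ring] at hv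
      rw [show d - 2*(K:ℤ) = 0 by omega] at hu
      have hKpow : ((-1:ℂ))^((K-1:ℕ)+1) = (-1:ℂ)^K := by
        congr 1
        omega
      rw [hKpow] at hv
      have hr := hrel (n + (K:ℤ) - 1) 0
      rw [if_neg (by omega),
        show n + (K:ℤ) - 1 + 1 = n + (K:ℤ) by ring,
        show n + (K:ℤ) - 1 - 1 = n + (K:ℤ) - 2 by ring,
        show (0:ℤ) - 1 = -1 by ring, show (0:ℤ) + 1 = 1 by ring,
        hneg (n + (K:ℤ) - 1) (-1) (by omega), hu, hv] at hr
      push_cast at hr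
      have hpos : (0:ℚ) < ((n:ℚ) + K) * q + qQ := by
        have h7 : (0:ℚ) < (n:ℚ) + K := by
          have : ((n:ℤ):ℚ) ≥ 0 := by exact_mod_cast hn0
          push_cast at this
          have hKq : (0:ℚ) < (K:ℚ) := by exact_mod_cast hK1
          linarith
        nlinarith
      have hzero' : ((-1:ℂ))^K * (G n d * ((((n:ℚ) + K) * q + qQ : ℚ) : ℂ)) = 0 := by
        push_cast
        linear_combination hr
      have hzero := (mul_eq_zero.mp hzero').resolve_left
        (pow_ne_zero K (by norm_num : (-1:ℂ) ≠ 0))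
      rcases mul_eq_zero.mp hzero with h | h
      · exact hn h
      · have : (((n:ℚ) + K) * q + qQ : ℚ) = 0 := by exact_mod_cast h
        linarith
    · -- d = 2e+1, odd, e ≥ 0
      have he0 : (0:ℤ) ≤ e := by omega
      set K : ℕ := e.toNat with hK
      have hKe : (K:ℤ) = e := Int.toNat_of_nonneg he0
      obtain ⟨QA, -, -⟩ := (key K).2 (by omega)
      obtain ⟨-, q, hq, hu⟩ := (key K).1 (by omega)
      rw [show d - 2*(K:ℤ) = 1 by omega] at hu
      rw [show d - 2*(K:ℤ) - 1 = 0 by omega] at QA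
      have hr := hrel (n + (K:ℤ) + 1) 0
      rw [if_neg (by omega),
        show n + (K:ℤ) + 1 + 1 = n + (K:ℤ) + 2 by ring,
        show n + (K:ℤ) + 1 - 1 = n + (K:ℤ) by ring,
        show (0:ℤ) - 1 = -1 by ring, show (0:ℤ) + 1 = 1 by ring,
        hneg (n + (K:ℤ) + 1) (-1) (by omega),
        QA (n + (K:ℤ) + 2) (by omega), hu] at hr
      push_cast at hr
      have hzero' : ((-1:ℂ))^K * (G n d * ((q : ℚ) : ℂ)) = 0 := by
        push_cast
        linear_combination hr
      have hzero := (mul_eq_zero.mp hzero').resolve_left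
        (pow_ne_zero K (by norm_num : (-1:ℂ) ≠ 0))
      rcases mul_eq_zero.mp hzero with h | h
      · exact hn h
      · have : (q : ℚ) = 0 := by exact_mod_cast h
        linarith

noncomputable def Fz (p : MvPolynomial (Fin 3) ℂ) (k i j : ℤ) : ℂ :=
  if 0 ≤ k ∧ 0 ≤ i ∧ 0 ≤ j then Fc p k.toNat i.toNat j.toNat else 0

lemma Fz_ofNat (p : MvPolynomial (Fin 3) ℂ) (k i j : ℕ) :
    Fz p k i j = Fc p k i j := by
  rw [Fz, if_pos (by omega)]
  simp

lemma Fz_neg {p : MvPolynomial (Fin 3) ℂ} {k i j : ℤ} (h : k < 0 ∨ i < 0 ∨ j < 0) :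
    Fz p k i j = 0 := by
  rw [Fz, if_neg (by omega)]

lemma masterZ (p : MvPolynomial (Fin 3) ℂ) (c : ℂ) (h : DAiry p + C c * X 1 = 0)
    (k i j : ℤ) :
    ((k+1:ℤ):ℂ) * Fz p (k+1) i j + ((i+1:ℤ):ℂ) * Fz p k (i+1) (j-1)
    + ((j+1:ℤ):ℂ) * Fz p (k-1) (i-1) (j+1)
    + (if k = 0 ∧ i = 1 ∧ j = 0 then c else 0) = 0 := by
  by_cases hk : 0 ≤ k
  · by_cases hi : 0 ≤ i
    · by_cases hj : 0 ≤ j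
      · obtain ⟨K, rfl⟩ := Int.eq_ofNat_of_zero_le hk
        obtain ⟨I, rfl⟩ := Int.eq_ofNat_of_zero_le hi
        obtain ⟨J, rfl⟩ := Int.eq_ofNat_of_zero_le hj
        have E1 : Fz p ((K:ℤ)+1) I J = Fc p (K+1) I J := by
          rw [show ((K:ℤ)+1) = ((K+1:ℕ):ℤ) by push_cast; ring, Fz_ofNat]
        have E2 : Fz p K ((I:ℤ)+1) ((J:ℤ)-1)
            = (if J = 0 then 0 else Fc p K (I+1) (J-1)) := by
          by_cases hJ : J = 0
          · subst hJ
            rw [if_pos rfl]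
            exact Fz_neg (by omega)
          · rw [if_neg hJ, show ((I:ℤ)+1) = ((I+1:ℕ):ℤ) by push_cast; ring,
              show ((J:ℤ)-1) = ((J-1:ℕ):ℤ) by omega, Fz_ofNat]
        have E3 : Fz p ((K:ℤ)-1) ((I:ℤ)-1) ((J:ℤ)+1)
            = (if K = 0 ∨ I = 0 then 0 else Fc p (K-1) (I-1) (J+1)) := by
          by_cases hKI : K = 0 ∨ I = 0
          · rw [if_pos hKI]
            exact Fz_neg (by omega)
          · rw [if_neg hKI, show ((K:ℤ)-1) = ((K-1:ℕ):ℤ) by omega,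
              show ((I:ℤ)-1) = ((I-1:ℕ):ℤ) by omega,
              show ((J:ℤ)+1) = ((J+1:ℕ):ℤ) by push_cast; ring, Fz_ofNat]
        have E4 : (if (K:ℤ) = 0 ∧ (I:ℤ) = 1 ∧ (J:ℤ) = 0 then c else 0)
            = (if K = 0 ∧ I = 1 ∧ J = 0 then c else 0) := by
          by_cases hδ : K = 0 ∧ I = 1 ∧ J = 0
          · rw [if_pos hδ, if_pos (by omega)]
          · rw [if_neg hδ, if_neg (by omega)]
        rw [E1, E2, E3, E4]
        have hN := masterN p c h K I J
        push_cast
        push_cast at hN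
        linear_combination hN
      · -- j < 0
        push_neg at hj
        have T1 : Fz p (k+1) i j = 0 := Fz_neg (by omega)
        have T2 : Fz p k (i+1) (j-1) = 0 := Fz_neg (by omega)
        rw [T1, T2, if_neg (by omega)]
        by_cases hj1 : j = -1
        · subst hj1
          norm_num
        · rw [Fz_neg (p := p) (k := k-1) (i := i-1) (j := j+1) (by omega)]
          ring
    · -- i < 0
      push_neg at hi
      have T1 : Fz p (k+1) i j = 0 := Fz_neg (by omega)
      have T3 : Fz p (k-1) (i-1) (j+1) = 0 := Fz_neg (by omega)
      rw [T1, T3, if_neg (by omega)]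
      by_cases hi1 : i = -1
      · subst hi1
        norm_num
      · rw [Fz_neg (p := p) (k := k) (i := i+1) (j := j-1) (by omega)]
        ring
  · -- k < 0
    push_neg at hk
    have T2 : Fz p k (i+1) (j-1) = 0 := Fz_neg (by omega)
    have T3 : Fz p (k-1) (i-1) (j+1) = 0 := Fz_neg (by omega)
    rw [T2, T3, if_neg (by omega)]
    by_cases hk1 : k = -1
    · subst hk1
      norm_num
    · rw [Fz_neg (p := p) (k := k+1) (i := i) (j := j) (by omega)]
      ring

theorem DAiry_plus_c_y1_eq_zero (p : MvPolynomial (Fin 3) ℂ) (c : ℂ)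
    (h : DAiry p + C c * X 1 = 0) : c = 0 ∧ ∃ r : ℂ, p = C r := by
  classical
  -- finite support bound
  have hbound : ∀ k i j : ℕ, p.totalDegree < k → Fc p k i j = 0 := by
    intro k i j hk
    by_contra hc
    have hmem : mk3 k i j ∈ p.support := by
      rw [MvPolynomial.mem_support_iff]
      exact hc
    have hle := MvPolynomial.le_totalDegree (p := p) (s := mk3 k i j) hmem
    have hsum : ((mk3 k i j).sum fun _ e => e) = k + i + j := by
      rw [Finsupp.sum_fintype _ _ (fun _ => rfl)]
      rw [Fin.sum_univ_three]
      rw [mk3_apply0, mk3_apply1, mk3_apply2]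
    omega
  -- apply the slice lemma for every total y-degree d ≥ 1
  have slc : ∀ d : ℤ, 1 ≤ d →
      (∀ k j : ℤ, Fz p k (d-j) j = 0) ∧ (d = 1 → c = 0) := by
    intro d hd1
    apply sliceLemma (G := fun k j => Fz p k (d-j) j) d hd1 c
    · intro k j hkj
      rcases hkj with hx | hx | hx
      · exact Fz_neg (Or.inl hx)
      · exact Fz_neg (Or.inr (Or.inr hx))
      · exact Fz_neg (Or.inr (Or.inl (by omega)))
    · refine ⟨(p.totalDegree : ℤ) + 1, fun k j hk => ?_⟩
      rw [Fz]
      split_ifs with hx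
      · exact hbound _ _ _ (by omega)
      · rfl
    · intro k j
      have hm := masterZ p c h k (d-j) j
      rw [show d-j+1 = d-(j-1) by ring, show d-j-1 = d-(j+1) by ring] at hm
      have E4 : (if k = 0 ∧ d-j = 1 ∧ j = 0 then c else 0)
          = (if k = 0 ∧ j = 0 ∧ d = 1 then c else 0) := by
        by_cases hδ : k = 0 ∧ j = 0 ∧ d = 1
        · rw [if_pos (by omega), if_pos hδ]
        · rw [if_neg (by omega), if_neg hδ]
      rw [E4] at hm
      push_cast at hm ⊢
      linear_combination hm
  have hc0 : c = 0 := (slc 1 le_rfl).2 rfl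
  refine ⟨hc0, coeff 0 p, ?_⟩
  apply MvPolynomial.ext
  intro m
  rw [MvPolynomial.coeff_C]
  by_cases hm : (0 : Fin 3 →₀ ℕ) = m
  · rw [if_pos hm, ← hm]
  · rw [if_neg hm]
    rw [eq_mk3 m]
    have hne : ¬(m 0 = 0 ∧ m 1 = 0 ∧ m 2 = 0) := by
      intro ⟨h1, h2, h3⟩
      apply hm
      conv_rhs => rw [eq_mk3 m]
      rw [h1, h2, h3]
      ext x
      fin_cases x <;> simp [mk3, Finsupp.single_apply]
    set k := m 0 with hk
    set i := m 1 with hi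
    set j := m 2 with hj
    show Fc p k i j = 0
    by_cases hij : i + j = 0
    · -- pure z monomial, k ≥ 1
      have hk1 : 1 ≤ k := by omega
      have hm2 := masterZ p c h ((k:ℤ)-1) ((0:ℕ):ℤ) ((0:ℕ):ℤ)
      rw [show ((k:ℤ)-1)+1 = (k:ℤ) by ring] at hm2
      rw [Fz_neg (p := p) (k := (k:ℤ)-1) (i := ((0:ℕ):ℤ)+1) (j := ((0:ℕ):ℤ)-1) (by omega)] at hm2
      rw [Fz_neg (p := p) (k := (k:ℤ)-1-1) (i := ((0:ℕ):ℤ)-1) (j := ((0:ℕ):ℤ)+1) (by omega)] at hm2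
      rw [if_neg (by omega), Fz_ofNat] at hm2
      have h2 : ((k:ℂ)) * Fc p k 0 0 = 0 := by
        push_cast at hm2
        linear_combination hm2
      have h3 : ((k:ℂ)) ≠ 0 := Nat.cast_ne_zero.mpr (by omega)
      have := (mul_eq_zero.mp h2).resolve_left h3
      rw [show i = 0 by omega, show j = 0 by omega]
      exact this
    · -- y-degree d = i + j ≥ 1
      have hd1 : (1:ℤ) ≤ ((i:ℤ) + j) := by omega
      have := (slc ((i:ℤ)+j) hd1).1 (k:ℤ) (j:ℤ)
      rw [show (i:ℤ)+j-j = (i:ℤ) by ring, Fz_ofNat] at this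
      exact this
end
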